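/- arXiv:1704.07231 — 7 statements merged into one kernel-verified Lean document; each statement's English description precedes it below -/
import Mathlib

section
/- Let M be a quadratic module of ℝ[X_1,…,X_n]. Then the following are equivalent: (a) M is Archimedean; (b) there is some N ∈ ℕ such that N − (X_1² + ⋯ + X_n²) ∈ M; (c) there are m ∈ ℕ and a tuple g = (g_1,…,g_m) of polynomials of degree at most 1 with g_1,…,g_m ∈ M such that the polyhedron S(g) is non-empty and compact; (d) for each polynomial f of degree at most 1, there is some N ∈ ℕ such that N + f ∈ M. -/
open MvPolynomial

noncomputable section

/-- `S(g) = {x ∈ ℝⁿ : g₁(x) ≥ 0, …, g_m(x) ≥ 0}`. -/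
def SolSet {n m : ℕ} (g : Fin m → MvPolynomial (Fin n) ℝ) : Set (Fin n → ℝ) :=
  {x | ∀ i, 0 ≤ eval x (g i)}

/-- `M` is a quadratic module of `ℝ[X₁,…,X_n]`. -/
def IsQuadraticModule {n : ℕ} (M : Set (MvPolynomial (Fin n) ℝ)) : Prop :=
  1 ∈ M ∧ (∀ p ∈ M, ∀ q ∈ M, p + q ∈ M) ∧
    ∀ p : MvPolynomial (Fin n) ℝ, ∀ q ∈ M, p ^ 2 * q ∈ M

/-- A quadratic module is Archimedean if for every polynomial `p` there is `N ∈ ℕ`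
with `N - p ∈ M`. -/
def IsArchimedeanQM {n : ℕ} (M : Set (MvPolynomial (Fin n) ℝ)) : Prop :=
  ∀ p : MvPolynomial (Fin n) ℝ, ∃ N : ℕ, (N : MvPolynomial (Fin n) ℝ) - p ∈ M

/-!
The elements `p` with `r - p² ∈ M` for some real `r` form an `ℝ`-subalgebra of the polynomial
ring, so `M` is Archimedean as soon as every variable is such an element; this follows both from
`N - ∑ Xᵢ² ∈ M` and from `N ± Xⱼ ∈ M`. An Archimedean `M` contains the constraints `N ± Xⱼ` of a
box. Conversely, if linear `gᵢ = bᵢ + aᵢ ⬝ X` in `M` cut out a nonempty compact polyhedron, then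
no direction `d ≠ 0` has `aᵢ ⬝ d ≥ 0` for all `i` (it would be a ray in the polyhedron), so by
hyperplane separation the `aᵢ` positively span `ℝⁿ`. Writing the linear part of `f` as
`∑ μᵢ aᵢ` with `μᵢ ≥ 0` gives `N + f = ∑ μᵢ gᵢ + (nonnegative constant) ∈ M` for large `N`.
-/

namespace MvPolynomial

theorem exists_eq_C_add_sum_smul_X_of_totalDegree_le_one {σ R : Type*} [Fintype σ]
    [CommSemiring R] {p : MvPolynomial σ R} (hp : p.totalDegree ≤ 1) :
    ∃ (b : R) (a : σ → R), p = C b + ∑ j, a j • X j := by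
  have h1 : homogeneousComponent 1 p ∈ Submodule.span R (Set.range X) := by
    rw [← homogeneousSubmodule_one_eq_span_X]
    exact homogeneousComponent_isHomogeneous 1 p
  obtain ⟨a, ha⟩ := (Submodule.mem_span_range_iff_exists_fun R).mp h1
  refine ⟨coeff 0 p, a, ?_⟩
  conv_lhs => rw [← sum_homogeneousComponent p]
  rcases Nat.le_one_iff_eq_zero_or_eq_one.mp hp with h | h
  · rw [homogeneousComponent_eq_zero _ _ (by omega : p.totalDegree < 1)] at ha
    simp [h, ha]
  · simp [h, Finset.sum_range_succ, ha]

theorem eval_C_add_sum_smul_X {σ R : Type*} [Fintype σ] [CommSemiring R] (b : R)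
    (a x : σ → R) : eval x (C b + ∑ j, a j • X j) = b + a ⬝ᵥ x := by
  simp [dotProduct, smul_eq_C_mul]

end MvPolynomial

theorem PointedCone.hull_eq_top_of_forall_nonneg {E : Type*} [NormedAddCommGroup E]
    [NormedSpace ℝ E] [FiniteDimensional ℝ E] {s : Set E}
    (hs : ∀ f : StrongDual ℝ E, (∀ x ∈ s, 0 ≤ f x) → f = 0) :
    PointedCone.hull ℝ s = ⊤ := by
  set K := PointedCone.hull ℝ s
  have hspan : Submodule.span ℝ s = ⊤ := by
    by_contra h
    obtain ⟨f, hf0, hf⟩ :=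
      Submodule.exists_dual_map_eq_bot_of_lt_top (lt_top_iff_ne_top.2 h) inferInstance
    refine hf0 (congrArg ContinuousLinearMap.toLinearMap
      (hs (LinearMap.toContinuousLinearMap f) fun x hx => ?_) :)
    have : f x ∈ (Submodule.span ℝ s).map f := ⟨x, Submodule.subset_span hx, rfl⟩
    rw [hf, Submodule.mem_bot] at this
    simp [this]
  have hint : (interior (K : Set E)).Nonempty := by
    rw [K.convex.interior_nonempty_iff_affineSpan_eq_top,
      AffineSubspace.affineSpan_eq_top_iff_vectorSpan_eq_top_of_nonempty ℝ E E ⟨0, K.zero_mem⟩,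
      vectorSpan_eq_span_vsub_set_right ℝ K.zero_mem, eq_top_iff, ← hspan]
    refine Submodule.span_mono fun x hx => ⟨x, PointedCone.subset_hull hx, by simp⟩
  rw [eq_top_iff]
  intro c _
  by_contra hc
  obtain ⟨f, hf0, hf⟩ :=
    geometric_hahn_banach_of_nonempty_interior_point K.convex (hc <| interior_subset ·) hint
  have hK : ∀ x ∈ K, f x ≤ 0 := by
    intro x hx
    by_contra! hfx
    have hfc : 0 ≤ f c := by simpa using hf 0 K.zero_mem
    have ht : 0 ≤ (f c + 1) / f x := by positivity
    have := hf _ (K.smul_mem ht hx)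
    rw [map_smul, smul_eq_mul, div_mul_cancel₀ _ hfx.ne'] at this
    linarith
  exact hf0 (neg_eq_zero.mp (hs (-f) fun x hx => by
    simpa using hK x (Submodule.subset_span hx)))

theorem eq_zero_of_forall_dotProduct_nonneg_of_isBounded {ι κ : Type*} [Fintype κ]
    (b : ι → ℝ) (a : ι → κ → ℝ)
    (hne : {x | ∀ i, 0 ≤ b i + a i ⬝ᵥ x}.Nonempty)
    (hbdd : Bornology.IsBounded {x | ∀ i, 0 ≤ b i + a i ⬝ᵥ x})
    {d : κ → ℝ} (hd : ∀ i, 0 ≤ a i ⬝ᵥ d) : d = 0 := by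
  obtain ⟨x, hx⟩ := hne
  obtain ⟨R, hR⟩ := hbdd.exists_norm_le
  have hray : ∀ t : ℝ, 0 ≤ t → ‖x + t • d‖ ≤ R := fun t ht => hR _ fun i => by
    rw [dotProduct_add, dotProduct_smul, smul_eq_mul, ← add_assoc]
    exact add_nonneg (hx i) (mul_nonneg ht (hd i))
  by_contra hd0
  have hpos : 0 < ‖d‖ := norm_pos_iff.2 hd0
  have hR0 : ‖x‖ ≤ R := by simpa using hray 0 le_rfl
  have hR0' : 0 ≤ R := (norm_nonneg x).trans hR0
  have := hray ((2 * R + 1) / ‖d‖) (by positivity)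
  have htri := norm_sub_le (x + ((2 * R + 1) / ‖d‖) • d) x
  rw [add_sub_cancel_left, norm_smul, Real.norm_of_nonneg (by positivity),
    div_mul_cancel₀ _ hpos.ne'] at htri
  linarith

theorem exists_nonneg_sum_smul_eq_of_isBounded {ι κ : Type*} [Fintype ι] [Fintype κ]
    (b : ι → ℝ) (a : ι → κ → ℝ)
    (hne : {x | ∀ i, 0 ≤ b i + a i ⬝ᵥ x}.Nonempty)
    (hbdd : Bornology.IsBounded {x | ∀ i, 0 ≤ b i + a i ⬝ᵥ x}) (c : κ → ℝ) :
    ∃ μ : ι → ℝ, (∀ i, 0 ≤ μ i) ∧ ∑ i, μ i • a i = c := by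
  classical
  have hdual : ∀ f : StrongDual ℝ (κ → ℝ), (∀ y ∈ Set.range a, 0 ≤ f y) → f = 0 := by
    intro f hf
    have hfd : ∀ y, f y = y ⬝ᵥ fun j => f (Pi.single j 1) := fun y => by
      conv_lhs => rw [← Finset.univ_sum_single y]
      simp only [dotProduct, map_sum]
      refine Finset.sum_congr rfl fun j _ => ?_
      rw [← smul_eq_mul, ← map_smul, ← Pi.single_smul, smul_eq_mul, mul_one]
    have hd := eq_zero_of_forall_dotProduct_nonneg_of_isBounded b a hne hbdd
      (d := fun j => f (Pi.single j 1)) fun i => hfd (a i) ▸ hf _ ⟨i, rfl⟩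
    ext y
    simp [hfd y, hd]
  have hc : c ∈ PointedCone.hull ℝ (Set.range a) := by
    rw [PointedCone.hull_eq_top_of_forall_nonneg hdual]; trivial
  obtain ⟨μ, hμ⟩ := (Submodule.mem_span_range_iff_exists_fun _).mp hc
  exact ⟨fun i => μ i, fun i => (μ i).2, by simpa [Nonneg.coe_smul] using hμ⟩

theorem IsArchimedeanQM.exists_compact_solSet {n : ℕ} {M : Set (MvPolynomial (Fin n) ℝ)}
    (hM : IsArchimedeanQM M) :
    ∃ (m : ℕ) (g : Fin m → MvPolynomial (Fin n) ℝ),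
      (∀ i, (g i).totalDegree ≤ 1 ∧ g i ∈ M) ∧ (SolSet g).Nonempty ∧ IsCompact (SolSet g) := by
  choose N hN using hM
  set ℓ : Fin n ⊕ Fin n → MvPolynomial (Fin n) ℝ := Sum.elim X (-X)
  set g : Fin (n + n) → MvPolynomial (Fin n) ℝ := fun k =>
    N (ℓ (finSumFinEquiv.symm k)) - ℓ (finSumFinEquiv.symm k)
  have hS : SolSet g = Set.Icc (fun j => -(N (-X j) : ℝ)) (fun j => (N (X j) : ℝ)) := by
    ext x
    simp only [SolSet, Set.mem_ofPred_eq, g, finSumFinEquiv.symm.forall_congr_left,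
      Equiv.symm_symm, Equiv.symm_apply_apply, Sum.forall, ℓ, Sum.elim_inl, Sum.elim_inr]
    simp [Pi.le_def, sub_nonneg, neg_le_iff_add_nonneg', and_comm]
  have hdeg : ∀ k, (g k).totalDegree ≤ 1 := by
    intro k
    simp only [g, sub_eq_add_neg]
    refine (totalDegree_add _ _).trans (max_le ?_ ?_)
    · rw [← map_natCast C, totalDegree_C]
      exact zero_le_one
    · rcases finSumFinEquiv.symm k with j | j <;> simp [ℓ, totalDegree_X]
  refine ⟨n + n, g, fun k => ⟨hdeg k, hN _⟩, ?_, hS ▸ isCompact_Icc⟩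
  exact hS ▸ Set.nonempty_Icc.2 fun j =>
    (neg_nonpos.2 (Nat.cast_nonneg _)).trans (Nat.cast_nonneg _)

namespace IsQuadraticModule

variable {n : ℕ} {M : Set (MvPolynomial (Fin n) ℝ)}

theorem add_mem (hM : IsQuadraticModule M) {p q : MvPolynomial (Fin n) ℝ} (hp : p ∈ M)
    (hq : q ∈ M) : p + q ∈ M :=
  hM.2.1 p hp q hq

theorem sq_mul_mem (hM : IsQuadraticModule M) (p : MvPolynomial (Fin n) ℝ)
    {q : MvPolynomial (Fin n) ℝ} (hq : q ∈ M) : p ^ 2 * q ∈ M :=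
  hM.2.2 p q hq

theorem sq_mem (hM : IsQuadraticModule M) (p : MvPolynomial (Fin n) ℝ) : p ^ 2 ∈ M := by
  simpa using hM.sq_mul_mem p hM.1

theorem smul_mem (hM : IsQuadraticModule M) {c : ℝ} (hc : 0 ≤ c) {q : MvPolynomial (Fin n) ℝ}
    (hq : q ∈ M) : c • q ∈ M := by
  have := hM.sq_mul_mem (C √c) hq
  rwa [← map_pow, Real.sq_sqrt hc, ← smul_eq_C_mul] at this

theorem mem_of_smul_mem (hM : IsQuadraticModule M) {c : ℝ} (hc : 0 < c)
    {q : MvPolynomial (Fin n) ℝ} (hq : c • q ∈ M) : q ∈ M := by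
  simpa [smul_smul, inv_mul_cancel₀ hc.ne'] using hM.smul_mem (inv_nonneg.2 hc.le) hq

theorem C_mem (hM : IsQuadraticModule M) {c : ℝ} (hc : 0 ≤ c) : C c ∈ M := by
  simpa [smul_eq_C_mul] using hM.smul_mem hc hM.1

theorem zero_mem (hM : IsQuadraticModule M) : (0 : MvPolynomial (Fin n) ℝ) ∈ M := by
  simpa using hM.C_mem le_rfl

theorem sum_mem (hM : IsQuadraticModule M) {ι : Type*} (s : Finset ι)
    {f : ι → MvPolynomial (Fin n) ℝ} (hf : ∀ i ∈ s, f i ∈ M) : ∑ i ∈ s, f i ∈ M :=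
  Finset.sum_induction f (· ∈ M) (fun _ _ => hM.add_mem) hM.zero_mem hf

theorem C_add_mem_of_le (hM : IsQuadraticModule M) {r s : ℝ} (hrs : r ≤ s)
    {p : MvPolynomial (Fin n) ℝ} (hp : C r + p ∈ M) : C s + p ∈ M := by
  have := hM.add_mem (hM.C_mem (sub_nonneg.2 hrs)) hp
  rwa [← add_assoc, ← map_add, sub_add_cancel] at this

theorem C_sub_mem_of_le (hM : IsQuadraticModule M) {r s : ℝ} (hrs : r ≤ s)
    {p : MvPolynomial (Fin n) ℝ} (hp : C r - p ∈ M) : C s - p ∈ M := by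
  rw [sub_eq_add_neg] at hp ⊢
  exact hM.C_add_mem_of_le hrs hp

def boundedSubalgebra (hM : IsQuadraticModule M) : Subalgebra ℝ (MvPolynomial (Fin n) ℝ) where
  carrier := {p | ∃ r : ℝ, C r - p ^ 2 ∈ M}
  algebraMap_mem' c := ⟨c ^ 2, by rw [algebraMap_eq, ← map_pow, sub_self]; exact hM.zero_mem⟩
  add_mem' := by
    rintro p q ⟨r, hr⟩ ⟨s, hs⟩
    refine ⟨2 * r + 2 * s, ?_⟩
    have h := hM.add_mem
      (hM.add_mem (hM.smul_mem zero_le_two hr) (hM.smul_mem zero_le_two hs)) (hM.sq_mem (p - q))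
    convert h using 1
    simp only [smul_eq_C_mul, map_add, map_mul, map_ofNat]
    ring
  mul_mem' := by
    rintro p q ⟨r, hr⟩ ⟨s, hs⟩
    have hr' := hM.C_sub_mem_of_le (le_max_left r 0) hr
    refine ⟨max r 0 * s, ?_⟩
    have h := hM.add_mem (hM.sq_mul_mem q hr') (hM.smul_mem (le_max_right r 0) hs)
    convert h using 1
    simp only [smul_eq_C_mul, map_mul]
    ring

theorem isArchimedeanQM_of_forall_X_mem (hM : IsQuadraticModule M)
    (hX : ∀ j, X j ∈ hM.boundedSubalgebra) : IsArchimedeanQM M := by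
  intro p
  have htop : hM.boundedSubalgebra = ⊤ := by
    rw [eq_top_iff, ← adjoin_range_X, Algebra.adjoin_le_iff]
    rintro _ ⟨j, rfl⟩
    exact hX j
  obtain ⟨r, hr⟩ : p ∈ hM.boundedSubalgebra := htop ▸ Algebra.mem_top
  obtain ⟨N, hN⟩ := exists_nat_ge (r + 1)
  refine ⟨N, hM.mem_of_smul_mem zero_lt_two ?_⟩
  -- `2 (N - p) = (p - 1)² + (r - p²) + (2N - r - 1)`
  have h := hM.add_mem (hM.add_mem (hM.sq_mem (p - 1)) hr)
    (hM.C_mem (by linarith : (0 : ℝ) ≤ 2 * N - r - 1))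
  convert h using 1
  simp only [smul_eq_C_mul, map_sub, map_mul, map_natCast, map_one, map_ofNat]
  ring

theorem X_mem_boundedSubalgebra_of_C_sub_sum_sq_mem (hM : IsQuadraticModule M) {r : ℝ}
    (hr : C r - ∑ i, X i ^ 2 ∈ M) (j : Fin n) : X j ∈ hM.boundedSubalgebra := by
  refine ⟨r, ?_⟩
  have h := hM.add_mem hr (hM.sum_mem (Finset.univ.erase j) fun i _ => hM.sq_mem (X i))
  rwa [← Finset.add_sum_erase _ _ (Finset.mem_univ j), sub_add_eq_sub_sub,
    sub_add_cancel] at h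

theorem mem_boundedSubalgebra_of_add_mem_of_sub_mem (hM : IsQuadraticModule M) {r : ℝ}
    {p : MvPolynomial (Fin n) ℝ} (hadd : C r + p ∈ M) (hsub : C r - p ∈ M) :
    p ∈ hM.boundedSubalgebra := by
  set s := max r 1
  have hs : 0 < s := lt_max_of_lt_right one_pos
  have hadd' := hM.C_add_mem_of_le (le_max_left r 1) hadd
  have hsub' := hM.C_sub_mem_of_le (le_max_left r 1) hsub
  refine ⟨s ^ 2, hM.mem_of_smul_mem (by positivity : 0 < 2 * s) ?_⟩
  -- `(s + p)² (s - p) + (s - p)² (s + p) = 2 s (s² - p²)`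
  have h := hM.add_mem (hM.sq_mul_mem (C s + p) hsub') (hM.sq_mul_mem (C s - p) hadd')
  convert h using 1
  simp only [smul_eq_C_mul, map_mul, map_pow, map_ofNat]
  ring

theorem exists_natCast_add_mem_of_isCompact_solSet (hM : IsQuadraticModule M) {m : ℕ}
    {g : Fin m → MvPolynomial (Fin n) ℝ} (hg : ∀ i, (g i).totalDegree ≤ 1 ∧ g i ∈ M)
    (hne : (SolSet g).Nonempty) (hcpt : IsCompact (SolSet g))
    {f : MvPolynomial (Fin n) ℝ} (hf : f.totalDegree ≤ 1) :
    ∃ N : ℕ, (N : MvPolynomial (Fin n) ℝ) + f ∈ M := by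
  choose b a hba using fun i : Fin m =>
    exists_eq_C_add_sum_smul_X_of_totalDegree_le_one (hg i).1
  obtain ⟨c₀, c, rfl⟩ := exists_eq_C_add_sum_smul_X_of_totalDegree_le_one hf
  have hS : SolSet g = {x | ∀ i, 0 ≤ b i + a i ⬝ᵥ x} := by
    simp only [SolSet, hba, eval_C_add_sum_smul_X]
  rw [hS] at hne hcpt
  obtain ⟨μ, hμ, rfl⟩ := exists_nonneg_sum_smul_eq_of_isBounded b a hne hcpt.isBounded c
  obtain ⟨N, hN⟩ := exists_nat_ge (∑ i, μ i * b i - c₀)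
  refine ⟨N, ?_⟩
  -- `N + f = ∑ μᵢ gᵢ + (N + c₀ - ∑ μᵢ bᵢ)`
  have h := hM.add_mem (hM.sum_mem Finset.univ fun i _ => hM.smul_mem (hμ i) (hg i).2)
    (hM.C_mem (by linarith : (0 : ℝ) ≤ N + c₀ - ∑ i, μ i * b i))
  convert h using 1
  simp only [hba, smul_add, Finset.smul_sum, smul_smul, Finset.sum_add_distrib, Finset.sum_apply,
    Pi.smul_apply, smul_eq_mul, Finset.sum_smul]
  rw [Finset.sum_comm]
  simp only [smul_eq_C_mul, map_sub, map_add, map_natCast, map_sum, map_mul]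
  ring

theorem isArchimedeanQM_of_forall_natCast_add_mem (hM : IsQuadraticModule M)
    (h : ∀ f : MvPolynomial (Fin n) ℝ, f.totalDegree ≤ 1 →
      ∃ N : ℕ, (N : MvPolynomial (Fin n) ℝ) + f ∈ M) :
    IsArchimedeanQM M := by
  refine hM.isArchimedeanQM_of_forall_X_mem fun j => ?_
  obtain ⟨N₁, h₁⟩ := h (X j) (totalDegree_X j).le
  obtain ⟨N₂, h₂⟩ := h (-X j) (by rw [totalDegree_neg, totalDegree_X])
  rw [← map_natCast C] at h₁ h₂
  refine hM.mem_boundedSubalgebra_of_add_mem_of_sub_mem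
    (hM.C_add_mem_of_le (le_add_of_nonneg_right N₂.cast_nonneg) h₁)
    (hM.C_sub_mem_of_le (le_add_of_nonneg_left N₁.cast_nonneg) (by rwa [sub_eq_add_neg]))

end IsQuadraticModule

theorem stmt_0 {n : ℕ} (M : Set (MvPolynomial (Fin n) ℝ)) (hM : IsQuadraticModule M) :
    (IsArchimedeanQM M ↔
      ∃ N : ℕ, (N : MvPolynomial (Fin n) ℝ) - ∑ i : Fin n, X i ^ 2 ∈ M) ∧
    (IsArchimedeanQM M ↔
      ∃ (m : ℕ) (g : Fin m → MvPolynomial (Fin n) ℝ),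
        (∀ i, (g i).totalDegree ≤ 1 ∧ g i ∈ M) ∧
        (SolSet g).Nonempty ∧ IsCompact (SolSet g)) ∧
    (IsArchimedeanQM M ↔
      ∀ f : MvPolynomial (Fin n) ℝ, f.totalDegree ≤ 1 →
        ∃ N : ℕ, (N : MvPolynomial (Fin n) ℝ) + f ∈ M) := by
  have hd : IsArchimedeanQM M → ∀ f : MvPolynomial (Fin n) ℝ, f.totalDegree ≤ 1 →
      ∃ N : ℕ, (N : MvPolynomial (Fin n) ℝ) + f ∈ M :=
    fun h f _ => by simpa using h (-f)
  refine ⟨⟨fun h => h _, fun ⟨N, hN⟩ => ?_⟩, ⟨IsArchimedeanQM.exists_compact_solSet, ?_⟩,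
    ⟨hd, hM.isArchimedeanQM_of_forall_natCast_add_mem⟩⟩
  · rw [← map_natCast C] at hN
    exact hM.isArchimedeanQM_of_forall_X_mem
      (hM.X_mem_boundedSubalgebra_of_C_sub_sum_sq_mem hN)
  · rintro ⟨m, g, hg, hne, hcpt⟩
    exact hM.isArchimedeanQM_of_forall_natCast_add_mem fun f hf =>
      hM.exists_natCast_add_mem_of_isCompact_solSet hg hne hcpt hf
end
end

section
/- Suppose d ∈ ℕ₀, g = (g_1,…,g_m) is a tuple of polynomials in ℝ[X_1,…,X_n] each of degree at most d, and S(g) is compact, convex and has nonempty interior. Then S_d(g) = S(g) if and only if every polynomial f ∈ ℝ[X_1,…,X_n] of degree at most 1 with f ≥ 0 on S(g) lies in M_d(g). -/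
open MvPolynomial Matrix

noncomputable section

/-- The extended tuple `(g₀, g₁, …, g_m)` with `g₀ := 1`. -/
def withOne {n m : ℕ} (g : Fin m → MvPolynomial (Fin n) ℝ) :
    Fin (m + 1) → MvPolynomial (Fin n) ℝ :=
  Fin.cons 1 g

/-- A polynomial is a sum of squares. -/
def IsSOS {n : ℕ} (p : MvPolynomial (Fin n) ℝ) : Prop :=
  ∃ (l : ℕ) (q : Fin l → MvPolynomial (Fin n) ℝ), p = ∑ i, q i ^ 2

/-- The quadratic module `M(g)` generated by `g₁,…,g_m` (with `g₀ := 1`). -/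
def QM {n m : ℕ} (g : Fin m → MvPolynomial (Fin n) ℝ) : Set (MvPolynomial (Fin n) ℝ) :=
  {f | ∃ s : Fin (m + 1) → MvPolynomial (Fin n) ℝ,
    (∀ i, IsSOS (s i)) ∧ f = ∑ i, s i * withOne g i}

/-- `p ∈ ℝ[X]_{r_i}` where `r_i = (d - deg g_i)/2` if `g_i ≠ 0` and `r_i = -∞` if `g_i = 0`:
either `p = 0`, or `g_i ≠ 0` and `2 deg p + deg g_i ≤ d`. -/
def DegOK {n : ℕ} (d : ℕ) (gi p : MvPolynomial (Fin n) ℝ) : Prop :=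
  p = 0 ∨ (gi ≠ 0 ∧ 2 * p.totalDegree + gi.totalDegree ≤ d)

/-- The `d`-truncated `k×k` matricial quadratic module `M_d^{k×k}(g)`. -/
def MatTruncQM {n : ℕ} (d : ℕ) {m : ℕ} (g : Fin m → MvPolynomial (Fin n) ℝ) (k : ℕ) :
    Set (Matrix (Fin k) (Fin k) (MvPolynomial (Fin n) ℝ)) :=
  {H | ∃ (N : ℕ) (P : Fin (m + 1) → Fin N → Matrix (Fin k) (Fin k) (MvPolynomial (Fin n) ℝ)),
    (∀ i j a b, DegOK d (withOne g i) (P i j a b)) ∧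
    H = ∑ i, ∑ j, withOne g i • ((P i j)ᵀ * P i j)}


/-- The `d`-truncated quadratic module `M_d(g)`. -/
def TruncQM {n : ℕ} (d : ℕ) {m : ℕ} (g : Fin m → MvPolynomial (Fin n) ℝ) :
    Set (MvPolynomial (Fin n) ℝ) :=
  {f | ∃ (N : ℕ) (p : Fin (m + 1) → Fin N → MvPolynomial (Fin n) ℝ),
    (∀ i j, DegOK d (withOne g i) (p i j)) ∧
    f = ∑ i, ∑ j, p i j ^ 2 * withOne g i}

/-- The degree `d` Lasserre relaxation `S_d(g)`: all `x ∈ ℝⁿ` admitting a linear functional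
`L` on `ℝ[X]_d` with `L(1) = 1`, `L(X_i) = x_i` and `L ≥ 0` on `M_d(g)`. -/
def Lasserre {n : ℕ} (d : ℕ) {m : ℕ} (g : Fin m → MvPolynomial (Fin n) ℝ) :
    Set (Fin n → ℝ) :=
  {x | ∃ L : MvPolynomial.restrictTotalDegree (Fin n) ℝ d →ₗ[ℝ] ℝ,
    (∀ p : MvPolynomial.restrictTotalDegree (Fin n) ℝ d,
      (p : MvPolynomial (Fin n) ℝ) = 1 → L p = 1) ∧
    (∀ i : Fin n, ∀ p : MvPolynomial.restrictTotalDegree (Fin n) ℝ d,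
      (p : MvPolynomial (Fin n) ℝ) = X i → L p = x i) ∧
    (∀ p : MvPolynomial.restrictTotalDegree (Fin n) ℝ d,
      (p : MvPolynomial (Fin n) ℝ) ∈ TruncQM d g → 0 ≤ L p)}


/-!
`S(g) ⊆ S_d(g)` always (take `L` = evaluation at the point). If every linear `f ≥ 0` on `S(g)` lies
in `M_d(g)`, a point `x ∈ S_d(g) \ S(g)` is separated from the closed convex set `S(g)` by such an
`f`, and its functional gives `0 ≤ L f = f(x) < 0`.

Conversely, suppose `S_d(g) = S(g)`. Since `S(g)` has interior, `M_d(g)` is a closed convex cone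
in the finite-dimensional space `ℝ[X]_d`: by Gram reduction it is the image of a coefficient space
under a continuous map that is homogeneous of degree 2 and vanishes only at 0, hence proper. A
linear `f ≥ 0` on `S(g)` outside `M_d(g)` is then separated from it by some `Λ ≥ 0` on `M_d(g)`
with `Λ f < 0`; normalising `Λ + ε · ev_s` for `s ∈ S(g)` yields points of `S_d(g) = S(g)`, where
`f ≥ 0`, and `ε → 0` gives `Λ f ≥ 0`. For `d = 0` the relaxation is all of `ℝⁿ`, which is compact
only when `n = 0`.
-/

section ClosedRange

variable {E F : Type*} [NormedAddCommGroup E] [NormedSpace ℝ E] [FiniteDimensional ℝ E]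
  [NormedAddCommGroup F] [NormedSpace ℝ F] {Ψ : E → F} {k : ℕ}

lemma exists_pos_mul_norm_pow_le_norm_of_homogeneous (hk : 0 < k) (hΨ : Continuous Ψ)
    (hsmul : ∀ t : ℝ, 0 < t → ∀ c, Ψ (t • c) = t ^ k • Ψ c) (hker : ∀ c, Ψ c = 0 → c = 0) :
    ∃ δ > 0, ∀ c, δ * ‖c‖ ^ k ≤ ‖Ψ c‖ := by
  obtain ⟨δ, hδ, hsphere⟩ := (isCompact_sphere (0 : E) 1).exists_forall_le'
    hΨ.norm.continuousOn fun c hc => norm_pos_iff.2 fun h => by simp [hker c h] at hc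
  refine ⟨δ, hδ, fun c => ?_⟩
  rcases eq_or_ne c 0 with rfl | hc
  · simp [zero_pow hk.ne']
  have hnorm : 0 < ‖c‖ := norm_pos_iff.2 hc
  have hunit : ‖c‖⁻¹ • c ∈ Metric.sphere (0 : E) 1 := by simp [norm_smul, hnorm.ne']
  calc δ * ‖c‖ ^ k ≤ ‖Ψ (‖c‖⁻¹ • c)‖ * ‖c‖ ^ k := by gcongr; exact hsphere _ hunit
    _ = ‖Ψ c‖ := by
      rw [hsmul _ (inv_pos.2 hnorm), norm_smul, norm_pow, norm_inv, norm_norm, mul_comm,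
        ← mul_assoc, ← mul_pow, mul_inv_cancel₀ hnorm.ne', one_pow, one_mul]

lemma isClosed_range_of_homogeneous (hk : 0 < k) (hΨ : Continuous Ψ)
    (hsmul : ∀ t : ℝ, 0 < t → ∀ c, Ψ (t • c) = t ^ k • Ψ c) (hker : ∀ c, Ψ c = 0 → c = 0) :
    IsClosed (Set.range Ψ) := by
  obtain ⟨δ, hδ, hcoer⟩ := exists_pos_mul_norm_pow_le_norm_of_homogeneous hk hΨ hsmul hker
  refine (isProperMap_iff_tendsto_cocompact.2 ⟨hΨ, Filter.tendsto_cocompact_cocompact_of_norm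
    fun ε => ⟨max 1 (ε / δ), fun c hc => ?_⟩⟩).isClosed_range
  have h1 : 1 ≤ ‖c‖ := (le_max_left _ _).trans hc.le
  calc ε = δ * (ε / δ) := by field_simp
    _ < δ * ‖c‖ := by gcongr; exact (le_max_right _ _).trans_lt hc
    _ ≤ δ * ‖c‖ ^ k := by gcongr; exact le_self_pow₀ h1 hk.ne'
    _ ≤ ‖Ψ c‖ := hcoer c

end ClosedRange

section Gram

variable {A : Type*} [CommRing A] [Algebra ℝ A] {ι κ : Type*} [Fintype ι] [Fintype κ]

lemma sq_sum_smul_mul (x : ι → ℝ) (β : ι → A) (γ : A) :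
    (∑ a, x a • β a) ^ 2 * γ = ∑ a, ∑ a', (x a * x a') • (β a * β a' * γ) := by
  rw [sq, Finset.sum_mul_sum, Finset.sum_mul]
  refine Finset.sum_congr rfl fun a _ => ?_
  rw [Finset.sum_mul]
  exact Finset.sum_congr rfl fun a' _ => by rw [smul_mul_smul_comm, smul_mul_assoc]

lemma sum_sq_sum_smul_eq_gram (G : Matrix κ ι ℝ) (β : ι → A) :
    ∑ j, (∑ a, G j a • β a) ^ 2 = ∑ a, ∑ a', (Gᵀ * G) a a' • (β a * β a') := by
  simp only [sq, Finset.sum_mul_sum, smul_mul_smul_comm, Matrix.mul_apply, Matrix.transpose_apply,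
    Finset.sum_smul]
  rw [Finset.sum_comm]
  exact Finset.sum_congr rfl fun a _ => Finset.sum_comm

lemma exists_sum_sq_sum_smul_eq (G : Matrix κ ι ℝ) (β : ι → A) :
    ∃ B : Matrix ι ι ℝ, ∑ j, (∑ a, G j a • β a) ^ 2 = ∑ k, (∑ a, B k a • β a) ^ 2 := by
  classical
  open scoped MatrixOrder in
  obtain ⟨B, hB⟩ := CStarAlgebra.nonneg_iff_eq_star_mul_self.mp
    (Matrix.posSemidef_conjTranspose_mul_self G).nonneg
  simp only [star_eq_conjTranspose, conjTranspose_eq_transpose_of_trivial] at hB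
  exact ⟨B, by rw [sum_sq_sum_smul_eq_gram, sum_sq_sum_smul_eq_gram, hB]⟩

end Gram

lemma MvPolynomial.eq_zero_of_eval_eq_zero_on_open {σ : Type*} [Fintype σ]
    {p : MvPolynomial σ ℝ} {U : Set (σ → ℝ)} (hU : IsOpen U) (hne : U.Nonempty)
    (h : ∀ x ∈ U, eval x p = 0) : p = 0 := by
  have han : AnalyticOnNhd ℝ (fun x : σ → ℝ => eval x p) Set.univ := by
    simpa using AnalyticOnNhd.eval_continuousLinearMap (ContinuousLinearMap.id ℝ (σ → ℝ)) p
  obtain ⟨x₀, hx₀⟩ := hne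
  have hzero := han.eqOn_zero_of_preconnected_of_eventuallyEq_zero isPreconnected_univ
    (Set.mem_univ x₀) (Filter.eventuallyEq_of_mem (hU.mem_nhds hx₀) h)
  exact MvPolynomial.funext fun x => by simpa using hzero (Set.mem_univ x)

section TruncatedQuadraticModule

variable {n m : ℕ} {d : ℕ} {g : Fin m → MvPolynomial (Fin n) ℝ}

lemma eval_withOne_nonneg {x : Fin n → ℝ} (hx : x ∈ SolSet g) (i : Fin (m + 1)) :
    0 ≤ eval x (withOne g i) := by
  induction i using Fin.cases with
  | zero => simp [withOne]
  | succ i => simpa [withOne] using hx i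

lemma isClosed_solSet : IsClosed (SolSet g) := by
  simp only [SolSet, Set.ofPred_forall]
  exact isClosed_iInter fun i => isClosed_le continuous_const (continuous_eval _)

lemma DegOK.totalDegree_sq_mul_le {gi p : MvPolynomial (Fin n) ℝ} (h : DegOK d gi p) :
    (p ^ 2 * gi).totalDegree ≤ d := by
  rcases h with rfl | ⟨-, h⟩
  · simp
  · calc (p ^ 2 * gi).totalDegree ≤ 2 * p.totalDegree + gi.totalDegree :=
          (totalDegree_mul _ _).trans (by gcongr; exact totalDegree_pow p 2)
      _ ≤ d := h

variable (d) in
def degOKSubmodule (gi : MvPolynomial (Fin n) ℝ) : Submodule ℝ (MvPolynomial (Fin n) ℝ) where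
  carrier := {p | DegOK d gi p}
  zero_mem' := Or.inl rfl
  add_mem' := by
    rintro p q (rfl | ⟨hgi, hp⟩) (rfl | ⟨hgi', hq⟩)
    · simp [DegOK]
    · exact Or.inr ⟨hgi', by simpa using hq⟩
    · exact Or.inr ⟨hgi, by simpa using hp⟩
    · refine Or.inr ⟨hgi, ?_⟩
      have := totalDegree_add p q
      omega
  smul_mem' := by
    rintro c p (rfl | ⟨hgi, hp⟩)
    · exact Or.inl (smul_zero c)
    · exact Or.inr ⟨hgi, by have := totalDegree_smul_le c p; omega⟩

lemma degOKSubmodule_le_restrictTotalDegree (gi : MvPolynomial (Fin n) ℝ) :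
    degOKSubmodule d gi ≤ restrictTotalDegree (Fin n) ℝ d := by
  rintro p (rfl | ⟨-, hp⟩) <;> rw [mem_restrictTotalDegree]
  · simp
  · omega

instance (gi : MvPolynomial (Fin n) ℝ) : FiniteDimensional ℝ (degOKSubmodule d gi) :=
  Submodule.finiteDimensional_of_le (degOKSubmodule_le_restrictTotalDegree gi)

lemma degOKSubmodule_zero : degOKSubmodule d (0 : MvPolynomial (Fin n) ℝ) = ⊥ :=
  (Submodule.eq_bot_iff _).2 fun _ h => h.resolve_right fun h => h.1 rfl

lemma sum_sq_mul_withOne_mem_truncQM {N : ℕ} (i : Fin (m + 1)) (p : Fin N → MvPolynomial (Fin n) ℝ)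
    (hp : ∀ j, DegOK d (withOne g i) (p j)) :
    ∑ j, p j ^ 2 * withOne g i ∈ TruncQM d g := by
  classical
  refine ⟨N, fun i' j => if i' = i then p j else 0, fun i' j => ?_, ?_⟩
  · by_cases h : i' = i
    · subst h; simpa using hp j
    · simp [h, DegOK]
  · rw [Fintype.sum_eq_single i fun i' hi' => by simp [hi']]
    simp

lemma add_mem_truncQM {q₁ q₂ : MvPolynomial (Fin n) ℝ} (h₁ : q₁ ∈ TruncQM d g)
    (h₂ : q₂ ∈ TruncQM d g) : q₁ + q₂ ∈ TruncQM d g := by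
  obtain ⟨N₁, p₁, hd₁, rfl⟩ := h₁
  obtain ⟨N₂, p₂, hd₂, rfl⟩ := h₂
  refine ⟨N₁ + N₂, fun i => Fin.append (p₁ i) (p₂ i), fun i j => ?_, ?_⟩
  · induction j using Fin.addCases with
    | left j => simpa using hd₁ i j
    | right j => simpa using hd₂ i j
  · simp [Fin.sum_univ_add, Finset.sum_add_distrib]

lemma smul_mem_truncQM {q : MvPolynomial (Fin n) ℝ} (h : q ∈ TruncQM d g) {c : ℝ}
    (hc : 0 ≤ c) : c • q ∈ TruncQM d g := by
  obtain ⟨N, p, hp, rfl⟩ := h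
  refine ⟨N, fun i j => Real.sqrt c • p i j, fun i j =>
    Submodule.smul_mem (degOKSubmodule d (withOne g i)) _ (hp i j), ?_⟩
  simp only [Finset.smul_sum, smul_pow, Real.sq_sqrt hc, smul_mul_assoc]

def truncQMCone (d : ℕ) (g : Fin m → MvPolynomial (Fin n) ℝ) :
    PointedCone ℝ (MvPolynomial (Fin n) ℝ) where
  carrier := TruncQM d g
  zero_mem' := ⟨0, fun _ => finZeroElim, fun _ j => j.elim0, by simp⟩
  add_mem' := add_mem_truncQM
  smul_mem' c _ hq := smul_mem_truncQM hq c.2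

lemma C_mem_truncQM {c : ℝ} (hc : 0 ≤ c) : (C c : MvPolynomial (Fin n) ℝ) ∈ TruncQM d g := by
  have hone : (1 : MvPolynomial (Fin n) ℝ) ∈ TruncQM d g := by
    simpa [withOne] using sum_sq_mul_withOne_mem_truncQM (d := d) (g := g) 0 ![1]
      fun _ => Or.inr ⟨one_ne_zero, by simp [withOne]⟩
  simpa [smul_eq_C_mul] using smul_mem_truncQM hone hc

lemma totalDegree_le_of_mem_truncQM {q : MvPolynomial (Fin n) ℝ} (h : q ∈ TruncQM d g) :
    q.totalDegree ≤ d := by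
  obtain ⟨N, p, hp, rfl⟩ := h
  exact (totalDegree_finsetSum _ _).trans <| Finset.sup_le fun i _ =>
    (totalDegree_finsetSum _ _).trans <| Finset.sup_le fun j _ => (hp i j).totalDegree_sq_mul_le

lemma eval_nonneg_of_mem_truncQM {q : MvPolynomial (Fin n) ℝ} (h : q ∈ TruncQM d g)
    {x : Fin n → ℝ} (hx : x ∈ SolSet g) : 0 ≤ eval x q := by
  obtain ⟨N, p, -, rfl⟩ := h
  simp only [map_sum, map_mul, map_pow]
  exact Finset.sum_nonneg fun i _ => Finset.sum_nonneg fun j _ =>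
    mul_nonneg (sq_nonneg _) (eval_withOne_nonneg hx i)

end TruncatedQuadraticModule

section GramParametrization

variable {n m : ℕ} (d : ℕ) (g : Fin m → MvPolynomial (Fin n) ℝ)

abbrev sqDim (i : Fin (m + 1)) : ℕ := Module.finrank ℝ (degOKSubmodule d (withOne g i))

def sqBasis (i : Fin (m + 1)) :
    Module.Basis (Fin (sqDim d g i)) ℝ (degOKSubmodule d (withOne g i)) :=
  Module.finBasis ℝ _

/-- `c i j` holds the coordinates in `sqBasis d g i` of the `j`-th polynomial whose square is
multiplied by `g_i`; by Gram reduction, `sqDim d g i` squares suffice (`exists_gramSOS_eq`). -/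
abbrev GramCoeffs : Type := ∀ i : Fin (m + 1), Fin (sqDim d g i) → Fin (sqDim d g i) → ℝ

def gramSOS (c : GramCoeffs d g) : MvPolynomial (Fin n) ℝ :=
  ∑ i, ∑ j, (∑ a, c i j a • (sqBasis d g i a : MvPolynomial (Fin n) ℝ)) ^ 2 * withOne g i

variable {d g}

lemma gramSOS_mem_truncQM (c : GramCoeffs d g) : gramSOS d g c ∈ TruncQM d g :=
  Submodule.sum_mem (truncQMCone d g) fun i _ => sum_sq_mul_withOne_mem_truncQM i _ fun _ =>
    Submodule.sum_mem (degOKSubmodule d _) fun a _ => Submodule.smul_mem _ _ (sqBasis d g i a).2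

lemma exists_gramSOS_eq {q : MvPolynomial (Fin n) ℝ} (hq : q ∈ TruncQM d g) :
    ∃ c : GramCoeffs d g, gramSOS d g c = q := by
  obtain ⟨N, p, hp, rfl⟩ := hq
  have hblock (i : Fin (m + 1)) : ∃ B : Matrix (Fin (sqDim d g i)) (Fin (sqDim d g i)) ℝ,
      ∑ k, (∑ a, B k a • (sqBasis d g i a : MvPolynomial (Fin n) ℝ)) ^ 2 = ∑ j, p i j ^ 2 := by
    obtain ⟨B, hB⟩ := exists_sum_sq_sum_smul_eq
      (Matrix.of fun j a => (sqBasis d g i).repr ⟨p i j, hp i j⟩ a)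
      (fun a => (sqBasis d g i a : MvPolynomial (Fin n) ℝ))
    refine ⟨B, hB.symm.trans (Finset.sum_congr rfl fun j _ => ?_)⟩
    have := congrArg Subtype.val ((sqBasis d g i).sum_repr ⟨p i j, hp i j⟩)
    simp only [Submodule.coe_sum, Submodule.coe_smul] at this
    simp [this]
  choose B hB using hblock
  exact ⟨B, Finset.sum_congr rfl fun i _ => by rw [← Finset.sum_mul, hB, Finset.sum_mul]⟩

lemma gramSOS_eq_sum (c : GramCoeffs d g) :
    gramSOS d g c = ∑ i, ∑ j, ∑ a, ∑ a', (c i j a * c i j a') •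
      ((sqBasis d g i a : MvPolynomial (Fin n) ℝ) * sqBasis d g i a' * withOne g i) := by
  simp only [gramSOS, sq_sum_smul_mul]

lemma gramSOS_smul (t : ℝ) (c : GramCoeffs d g) :
    gramSOS d g (t • c) = t ^ 2 • gramSOS d g c := by
  simp only [gramSOS, Pi.smul_apply, smul_eq_mul, mul_smul, ← Finset.smul_sum, smul_pow,
    smul_mul_assoc]

lemma eq_zero_of_gramSOS_eq_zero (hint : (interior (SolSet g)).Nonempty) {c : GramCoeffs d g}
    (h : gramSOS d g c = 0) : c = 0 := by
  set p : ∀ i, Fin (sqDim d g i) → MvPolynomial (Fin n) ℝ :=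
    fun i j => ∑ a, c i j a • (sqBasis d g i a : MvPolynomial (Fin n) ℝ)
  -- Each summand is `≥ 0` on `S(g)`, so it vanishes on the interior, hence identically.
  have hterm (i : Fin (m + 1)) (j : Fin (sqDim d g i)) : p i j ^ 2 * withOne g i = 0 := by
    refine eq_zero_of_eval_eq_zero_on_open isOpen_interior hint fun x hx => ?_
    have hnonneg (i : Fin (m + 1)) (j : Fin (sqDim d g i)) :
        0 ≤ eval x (p i j ^ 2 * withOne g i) := by
      simpa using mul_nonneg (sq_nonneg _) (eval_withOne_nonneg (interior_subset hx) i)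
    have hsum : ∑ i, ∑ j, eval x (p i j ^ 2 * withOne g i) = 0 := by
      simpa only [gramSOS, map_sum, map_zero] using congrArg (eval x) h
    rw [Finset.sum_eq_zero_iff_of_nonneg fun i _ => Finset.sum_nonneg fun j _ => hnonneg i j]
      at hsum
    exact (Finset.sum_eq_zero_iff_of_nonneg fun j _ => hnonneg i j).1 (hsum i (Finset.mem_univ _))
      j (Finset.mem_univ _)
  ext i j a
  have hgi : withOne g i ≠ 0 := by
    intro hgi
    have : sqDim d g i = 0 := by simp [sqDim, hgi, degOKSubmodule_zero]
    exact (this ▸ j).elim0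
  have hpij : p i j = 0 :=
    (pow_eq_zero_iff two_ne_zero).1 ((mul_eq_zero.1 (hterm i j)).resolve_right hgi)
  have hli := ((sqBasis d g i).linearIndependent.map' _ (Submodule.ker_subtype _))
  exact Fintype.linearIndependent_iff.1 hli (c i j) hpij a

end GramParametrization

section Separation

variable {n m : ℕ} {d : ℕ} {g : Fin m → MvPolynomial (Fin n) ℝ}

variable (n d) in
/-- `ℝ[X]_d` carries no topology of its own; it is read in the coordinates given by the
coefficients of the monomials in the box `[0, d]ⁿ`, which contains all monomials of degree `≤ d`. -/
def monomialsLE : Finset (Fin n →₀ ℕ) := Finset.Iic (Finsupp.equivFunOnFinite.symm fun _ => d)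

variable (n d) in
def coeffProj : MvPolynomial (Fin n) ℝ →ₗ[ℝ] (monomialsLE n d → ℝ) :=
  LinearMap.pi fun s => lcoeff ℝ s.1

lemma eq_zero_of_coeffProj_eq_zero {p : MvPolynomial (Fin n) ℝ} (hp : p.totalDegree ≤ d)
    (h : coeffProj n d p = 0) : p = 0 := by
  ext s
  by_cases hs : s ∈ p.support
  · have hdeg : s.degree ≤ d := (le_totalDegree hs).trans hp
    have hsmem : s ∈ monomialsLE n d := Finset.mem_Iic.2 fun i => (s.le_degree i).trans hdeg
    exact congrFun h ⟨s, hsmem⟩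
  · simpa using hs

lemma continuous_coeffProj_gramSOS :
    Continuous fun c : GramCoeffs d g => coeffProj n d (gramSOS d g c) := by
  simp only [gramSOS_eq_sum, map_sum, map_smul]
  fun_prop

lemma isClosed_coeffProj_image_truncQM (hint : (interior (SolSet g)).Nonempty) :
    IsClosed (coeffProj n d '' TruncQM d g) := by
  have hrange :
      coeffProj n d '' TruncQM d g = Set.range fun c => coeffProj n d (gramSOS d g c) := by
    ext y
    constructor
    · rintro ⟨q, hq, rfl⟩
      obtain ⟨c, rfl⟩ := exists_gramSOS_eq hq
      exact ⟨c, rfl⟩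
    · rintro ⟨c, rfl⟩
      exact ⟨_, gramSOS_mem_truncQM c, rfl⟩
  rw [hrange]
  refine isClosed_range_of_homogeneous two_pos continuous_coeffProj_gramSOS
    (fun t _ c => by rw [gramSOS_smul, map_smul]) fun c hc => eq_zero_of_gramSOS_eq_zero hint ?_
  exact eq_zero_of_coeffProj_eq_zero (totalDegree_le_of_mem_truncQM (gramSOS_mem_truncQM c)) hc

theorem exists_functional_nonneg_truncQM (hint : (interior (SolSet g)).Nonempty)
    {f : MvPolynomial (Fin n) ℝ} (hfW : f ∈ restrictTotalDegree (Fin n) ℝ d)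
    (hf : f ∉ TruncQM d g) :
    ∃ Λ : restrictTotalDegree (Fin n) ℝ d →ₗ[ℝ] ℝ,
      (∀ p : restrictTotalDegree (Fin n) ℝ d, (p : MvPolynomial (Fin n) ℝ) ∈ TruncQM d g →
        0 ≤ Λ p) ∧ Λ ⟨f, hfW⟩ < 0 := by
  let K : ProperCone ℝ (monomialsLE n d → ℝ) :=
    { toSubmodule := (truncQMCone d g).map (coeffProj n d)
      isClosed' := isClosed_coeffProj_image_truncQM hint }
  have hfK : coeffProj n d f ∉ K := by
    rintro ⟨q, hq, hqf⟩
    replace hqf : coeffProj n d q = coeffProj n d f := hqf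
    replace hqf : q = f := by
      refine sub_eq_zero.1 (eq_zero_of_coeffProj_eq_zero ?_ (by rw [map_sub, hqf, sub_self]))
      exact (totalDegree_sub _ _).trans (max_le (totalDegree_le_of_mem_truncQM hq)
        ((mem_restrictTotalDegree _ _ _).1 hfW))
    exact hf (hqf ▸ hq)
  obtain ⟨φ, hφK, hφf⟩ := K.hyperplane_separation_point hfK
  exact ⟨φ.toLinearMap ∘ₗ coeffProj n d ∘ₗ (restrictTotalDegree (Fin n) ℝ d).subtype,
    fun p hp => hφK _ ⟨p, hp, rfl⟩, hφf⟩

end Separation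

section Lasserre

variable {n m : ℕ} {d : ℕ} {g : Fin m → MvPolynomial (Fin n) ℝ}

lemma one_mem_restrictTotalDegree {σ : Type*} :
    (1 : MvPolynomial σ ℝ) ∈ restrictTotalDegree σ ℝ d := by
  simp [mem_restrictTotalDegree]

lemma X_mem_restrictTotalDegree {σ : Type*} (hd : 1 ≤ d) (i : σ) :
    (X i : MvPolynomial σ ℝ) ∈ restrictTotalDegree σ ℝ d := by
  simpa [mem_restrictTotalDegree] using hd

variable (d) in
def evalOn (x : Fin n → ℝ) : restrictTotalDegree (Fin n) ℝ d →ₗ[ℝ] ℝ :=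
  (aeval x).toLinearMap ∘ₗ (restrictTotalDegree (Fin n) ℝ d).subtype

@[simp]
lemma evalOn_apply (x : Fin n → ℝ) (p : restrictTotalDegree (Fin n) ℝ d) :
    evalOn d x p = eval x (p : MvPolynomial (Fin n) ℝ) := by
  simp [evalOn]

lemma solSet_subset_lasserre : SolSet g ⊆ Lasserre d g := fun x hx =>
  ⟨evalOn d x, fun p hp => by simp [hp], fun i p hp => by simp [hp],
    fun p hp => by simpa using eval_nonneg_of_mem_truncQM hp hx⟩

lemma lasserre_zero_eq_univ (hne : (SolSet g).Nonempty) : Lasserre 0 g = Set.univ := by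
  obtain ⟨s, hs⟩ := hne
  refine Set.eq_univ_of_forall fun x => ⟨evalOn 0 s, fun p hp => by simp [hp], fun i p hp => ?_,
    fun p hp => by simpa using eval_nonneg_of_mem_truncQM hp hs⟩
  have := (mem_restrictTotalDegree _ _ _).1 p.2
  simp [hp] at this

lemma apply_eq_eval_of_totalDegree_le_one (hd : 1 ≤ d)
    {L : restrictTotalDegree (Fin n) ℝ d →ₗ[ℝ] ℝ} {x : Fin n → ℝ}
    (h1 : ∀ p : restrictTotalDegree (Fin n) ℝ d, (p : MvPolynomial (Fin n) ℝ) = 1 → L p = 1)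
    (hX : ∀ i, ∀ p : restrictTotalDegree (Fin n) ℝ d, (p : MvPolynomial (Fin n) ℝ) = X i →
      L p = x i)
    {f : MvPolynomial (Fin n) ℝ} (hf : f.totalDegree ≤ 1)
    (hfW : f ∈ restrictTotalDegree (Fin n) ℝ d) : L ⟨f, hfW⟩ = eval x f := by
  have hspan : f ∈ Submodule.span ℝ
      ((monomial · 1) '' {s : Fin n →₀ ℕ | s.sum (fun _ e => e) ≤ 1}) := by
    rw [← restrictSupport_eq_span]
    exact (mem_restrictTotalDegree _ _ _).2 hf
  have hle : Submodule.span ℝ ((monomial · 1) '' {s : Fin n →₀ ℕ | s.sum (fun _ e => e) ≤ 1}) ≤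
      restrictTotalDegree (Fin n) ℝ d := by
    rw [← restrictSupport_eq_span]
    exact fun p hp => (mem_restrictTotalDegree _ _ _).2
      (((mem_restrictTotalDegree _ _ _).1 hp).trans hd)
  clear hf
  revert hfW
  induction hspan using Submodule.span_induction with
  | mem p hp =>
    obtain ⟨s, hs, rfl⟩ := hp
    intro hpW
    rcases Nat.le_one_iff_eq_zero_or_eq_one.1 hs with hs0 | hs1
    · obtain rfl : s = 0 := (Finsupp.degree_eq_zero_iff s).1 hs0
      simp [h1]
    · obtain ⟨i, rfl⟩ := (Finsupp.sum_eq_one_iff _).1 hs1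
      exact (hX i ⟨_, hpW⟩ rfl).trans (eval_X (f := x) i).symm
  | zero => intro _; rw [map_zero]; exact L.map_zero
  | add p q hp hq ihp ihq =>
    intro hpq
    rw [show (⟨p + q, hpq⟩ : restrictTotalDegree (Fin n) ℝ d) = ⟨p, hle hp⟩ + ⟨q, hle hq⟩ from rfl,
      map_add, ihp, ihq, map_add]
  | smul c p hp ih =>
    intro hcp
    rw [show (⟨c • p, hcp⟩ : restrictTotalDegree (Fin n) ℝ d) = c • ⟨p, hle hp⟩ from rfl,
      map_smul, ih, smul_eval]
    simp

lemma exists_mem_lasserre_apply_eq_eval (hd : 1 ≤ d)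
    (L : restrictTotalDegree (Fin n) ℝ d →ₗ[ℝ] ℝ)
    (h1 : ∀ p : restrictTotalDegree (Fin n) ℝ d, (p : MvPolynomial (Fin n) ℝ) = 1 → L p = 1)
    (hL : ∀ p : restrictTotalDegree (Fin n) ℝ d, (p : MvPolynomial (Fin n) ℝ) ∈ TruncQM d g →
      0 ≤ L p) :
    ∃ x ∈ Lasserre d g, ∀ f : MvPolynomial (Fin n) ℝ, f.totalDegree ≤ 1 →
      ∀ hfW : f ∈ restrictTotalDegree (Fin n) ℝ d, L ⟨f, hfW⟩ = eval x f := by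
  have hX (i : Fin n) (p : restrictTotalDegree (Fin n) ℝ d)
      (hp : (p : MvPolynomial (Fin n) ℝ) = X i) :
      L p = L ⟨X i, X_mem_restrictTotalDegree hd i⟩ :=
    congrArg L (Subtype.ext hp)
  exact ⟨_, ⟨L, h1, hX, hL⟩, fun f hf hfW => apply_eq_eval_of_totalDegree_le_one hd h1 hX hf hfW⟩

end Lasserre

section ExactnessImpliesCertificates

variable {n m : ℕ} {d : ℕ} {g : Fin m → MvPolynomial (Fin n) ℝ}

theorem mem_truncQM_of_lasserre_subset (hd : 1 ≤ d) (hint : (interior (SolSet g)).Nonempty)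
    (hS : Lasserre d g ⊆ SolSet g) {f : MvPolynomial (Fin n) ℝ} (hf : f.totalDegree ≤ 1)
    (hfS : ∀ x ∈ SolSet g, 0 ≤ eval x f) : f ∈ TruncQM d g := by
  by_contra hfM
  have hfW : f ∈ restrictTotalDegree (Fin n) ℝ d := (mem_restrictTotalDegree _ _ _).2 (hf.trans hd)
  obtain ⟨Λ, hΛ, hΛf⟩ := exists_functional_nonneg_truncQM hint hfW hfM
  obtain ⟨s, hs⟩ := hint.mono interior_subset
  set one : restrictTotalDegree (Fin n) ℝ d := ⟨1, one_mem_restrictTotalDegree⟩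
  have hΛone : 0 ≤ Λ one := hΛ one (by simpa using C_mem_truncQM (n := n) zero_le_one)
  -- Normalising `Λ + ε • (evaluation at s)` gives a point of `S_d(g) ⊆ S(g)`, where `f ≥ 0`.
  have hperturb (ε : ℝ) (hε : 0 < ε) : 0 ≤ Λ ⟨f, hfW⟩ + ε * eval s f := by
    have ht : 0 < Λ one + ε := by positivity
    set L := (Λ one + ε)⁻¹ • (Λ + ε • evalOn d s)
    have hL (p : restrictTotalDegree (Fin n) ℝ d) :
        L p = (Λ one + ε)⁻¹ * (Λ p + ε * eval s (p : MvPolynomial (Fin n) ℝ)) := by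
      simp [L, mul_add]
    obtain ⟨x, hx, hxf⟩ := exists_mem_lasserre_apply_eq_eval hd L
      (fun p hp => by
        obtain rfl : p = one := Subtype.ext hp
        rw [hL, hp, map_one, mul_one, inv_mul_cancel₀ ht.ne'])
      (fun p hp => by
        have := hΛ p hp
        have := eval_nonneg_of_mem_truncQM hp hs
        rw [hL]
        positivity)
    have hLf := hfS x (hS hx)
    rw [← hxf f hf hfW, hL] at hLf
    exact nonneg_of_mul_nonneg_right hLf (inv_pos.2 ht)
  have hfs := hfS s hs
  have : 0 ≤ Λ ⟨f, hfW⟩ := le_of_forall_pos_le_add fun ε hε => by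
    have := hperturb (ε / (eval s f + 1)) (by positivity)
    have : ε / (eval s f + 1) * eval s f ≤ ε := by
      rw [div_mul_eq_mul_div, div_le_iff₀ (by positivity)]
      nlinarith
    linarith
  linarith

lemma isEmpty_of_lasserre_zero_eq_solSet (hcomp : IsCompact (SolSet g))
    (hne : (SolSet g).Nonempty) (h : Lasserre 0 g = SolSet g) : IsEmpty (Fin n) := by
  rw [lasserre_zero_eq_univ hne] at h
  exact not_nonempty_iff.1 fun _ => hcomp.ne_univ h.symm

lemma mem_truncQM_of_isEmpty [IsEmpty (Fin n)] (hne : (SolSet g).Nonempty)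
    {f : MvPolynomial (Fin n) ℝ} (hfS : ∀ x ∈ SolSet g, 0 ≤ eval x f) : f ∈ TruncQM d g := by
  obtain ⟨s, hs⟩ := hne
  obtain ⟨c, rfl⟩ : ∃ c, f = C c := ⟨_, eq_C_of_isEmpty f⟩
  exact C_mem_truncQM (by simpa using hfS s hs)

end ExactnessImpliesCertificates

section CertificatesImplyExactness

variable {n m : ℕ} {d : ℕ} {g : Fin m → MvPolynomial (Fin n) ℝ}

lemma exists_totalDegree_le_one_separating {S : Set (Fin n → ℝ)} (hconv : Convex ℝ S)
    (hclosed : IsClosed S) {x : Fin n → ℝ} (hx : x ∉ S) :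
    ∃ F : MvPolynomial (Fin n) ℝ, F.totalDegree ≤ 1 ∧ (∀ y ∈ S, 0 ≤ eval y F) ∧ eval x F < 0 := by
  obtain ⟨ℓ, u, hS, hx⟩ := geometric_hahn_banach_closed_point hconv hclosed hx
  have hℓ (y : Fin n → ℝ) : ℓ y = ∑ i, y i * ℓ (Pi.single i 1) := by
    conv_lhs => rw [← Finset.univ_sum_single y]
    refine (map_sum ℓ _ _).trans (Finset.sum_congr rfl fun i _ => ?_)
    rw [← smul_eq_mul, ← map_smul, ← Pi.single_smul, smul_eq_mul, mul_one]
  have hF (y : Fin n → ℝ) : eval y (C u - ∑ i, C (ℓ (Pi.single i 1)) * X i) = u - ℓ y := by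
    simp [hℓ y, mul_comm]
  refine ⟨C u - ∑ i, C (ℓ (Pi.single i 1)) * X i, ?_, fun y hy => ?_, ?_⟩
  · refine (totalDegree_sub _ _).trans (max_le (by simp) ?_)
    refine (totalDegree_finsetSum _ _).trans (Finset.sup_le fun i _ => ?_)
    exact (totalDegree_mul _ _).trans (by simp)
  · linarith [hF y, hS y hy]
  · linarith [hF x]

theorem lasserre_subset_solSet (hconv : Convex ℝ (SolSet g)) (hne : (SolSet g).Nonempty)
    (hlin : ∀ f : MvPolynomial (Fin n) ℝ, f.totalDegree ≤ 1 →
      (∀ x ∈ SolSet g, 0 ≤ eval x f) → f ∈ TruncQM d g) :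
    Lasserre d g ⊆ SolSet g := by
  rintro x ⟨L, h1, hX, hL⟩
  by_contra hx
  obtain ⟨F, hF1, hFS, hFx⟩ := exists_totalDegree_le_one_separating hconv isClosed_solSet hx
  have hFM := hlin F hF1 hFS
  rcases Nat.eq_zero_or_pos d with rfl | hd
  · have hFC := totalDegree_eq_zero_iff_eq_C.1 (Nat.le_zero.1 (totalDegree_le_of_mem_truncQM hFM))
    obtain ⟨s, hs⟩ := hne
    have := hFS s hs
    rw [hFC, eval_C] at this hFx
    linarith
  · have hFW := (mem_restrictTotalDegree _ _ _).2 (hF1.trans hd)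
    have := hL ⟨F, hFW⟩ hFM
    rw [apply_eq_eval_of_totalDegree_le_one hd h1 hX hF1 hFW] at this
    linarith

end CertificatesImplyExactness

theorem stmt_4_general {n m : ℕ} (d : ℕ) (g : Fin m → MvPolynomial (Fin n) ℝ)
    (hcomp : IsCompact (SolSet g)) (hconv : Convex ℝ (SolSet g))
    (hint : (interior (SolSet g)).Nonempty) :
    Lasserre d g = SolSet g ↔
      ∀ f : MvPolynomial (Fin n) ℝ, f.totalDegree ≤ 1 →
        (∀ x ∈ SolSet g, 0 ≤ eval x f) → f ∈ TruncQM d g := by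
  have hne : (SolSet g).Nonempty := hint.mono interior_subset
  refine ⟨fun h f hf hfS => ?_,
    fun hlin => (lasserre_subset_solSet hconv hne hlin).antisymm solSet_subset_lasserre⟩
  rcases Nat.eq_zero_or_pos d with rfl | hd
  · have := isEmpty_of_lasserre_zero_eq_solSet hcomp hne h
    exact mem_truncQM_of_isEmpty hne hfS
  · exact mem_truncQM_of_lasserre_subset hd hint h.subset hf hfS

theorem stmt_4 {n m : ℕ} (d : ℕ) (g : Fin m → MvPolynomial (Fin n) ℝ)
    (hdeg : ∀ i, (g i).totalDegree ≤ d)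
    (hcomp : IsCompact (SolSet g)) (hconv : Convex ℝ (SolSet g))
    (hint : (interior (SolSet g)).Nonempty) :
    Lasserre d g = SolSet g ↔
      ∀ f : MvPolynomial (Fin n) ℝ, f.totalDegree ≤ 1 →
        (∀ x ∈ SolSet g, 0 ≤ eval x f) → f ∈ TruncQM d g :=
  stmt_4_general d g hcomp hconv hint
end
end

section
/- Let n ∈ ℕ, g ∈ ℝ[X_1,…,X_n] and x ∈ ℝ^n such that g(x) = 0 and ∇g(x) ≠ 0, and let V be a neighborhood of x. Then the following are equivalent: (a) g is strictly quasiconcave at x; (b) there is a basis v_1,…,v_n of ℝ^n, an open neighborhood U of 0 in ℝ^{n−1} and a smooth function φ : U → ℝ such that φ(0) = 0, ∇φ(0) = 0, Hess φ(0) is positive definite, x + ξ_1 v_1 + ⋯ + ξ_{n−1} v_{n−1} + φ(ξ) v_n ∈ Z(g) ∩ V for all ξ ∈ U, and x + λ v_n ∈ S(g) ∩ V for all sufficiently small λ > 0; (c) condition (b) holds with 'basis' replaced by 'orthogonal basis'. Moreover, any basis v_1,…,v_n as in (b) satisfies (∇g(x))ᵀv_1 = ⋯ = (∇g(x))ᵀv_{n−1}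 = 0 and (∇g(x))ᵀv_n > 0. -/
open MvPolynomial Matrix

noncomputable section

/-- The gradient `∇g(x)` of a polynomial `g` at a point `x`. -/
def gradEval {n : ℕ} (g : MvPolynomial (Fin n) ℝ) (x : Fin n → ℝ) : Fin n → ℝ :=
  fun i => eval x (pderiv i g)

/-- The Hessian `(Hess g)(x)` of a polynomial `g` at a point `x`. -/
def hessEval {n : ℕ} (g : MvPolynomial (Fin n) ℝ) (x : Fin n → ℝ) :
    Matrix (Fin n) (Fin n) ℝ :=
  Matrix.of fun i j => eval x (pderiv i (pderiv j g))

/-- `g` is strictly quasiconcave at `x`: `vᵀ (Hess g(x)) v < 0` for every `v ≠ 0`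
orthogonal to `∇g(x)`. -/
def StrictlyQuasiconcaveAt {n : ℕ} (g : MvPolynomial (Fin n) ℝ) (x : Fin n → ℝ) : Prop :=
  ∀ v : Fin n → ℝ, v ≠ 0 → gradEval g x ⬝ᵥ v = 0 → v ⬝ᵥ (hessEval g x) *ᵥ v < 0

/-- The data of condition (b) of Proposition `qcc`: a basis `v₁,…,v_{n+1}` (given by `b`),
an open neighborhood `U` of `0` and a smooth `φ : U → ℝ` with `φ(0)=0`, `∇φ(0)=0`,
`Hess φ(0) ≻ 0`, parametrizing `Z(g) ∩ V` and entering `S(g) ∩ V` in direction `v_{n+1}`. -/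
def BasisWitness {n : ℕ} (g : MvPolynomial (Fin (n + 1)) ℝ) (x : Fin (n + 1) → ℝ)
    (V : Set (Fin (n + 1) → ℝ)) (b : Module.Basis (Fin (n + 1)) ℝ (Fin (n + 1) → ℝ))
    (U : Set (Fin n → ℝ)) (φ : (Fin n → ℝ) → ℝ) : Prop :=
  IsOpen U ∧ (0 : Fin n → ℝ) ∈ U ∧ ContDiffOn ℝ (⊤ : ℕ∞) φ U ∧ φ 0 = 0 ∧
    fderiv ℝ φ 0 = 0 ∧
    (∀ w : Fin n → ℝ, w ≠ 0 → 0 < fderiv ℝ (fderiv ℝ φ) 0 w w) ∧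
    (∀ ξ ∈ U,
      (x + (∑ i : Fin n, ξ i • b i.castSucc) + φ ξ • b (Fin.last n)) ∈
        {y | eval y g = 0} ∩ V) ∧
    ∃ ε > (0 : ℝ), ∀ l : ℝ, 0 < l → l < ε →
      (x + l • b (Fin.last n)) ∈ {y | 0 ≤ eval y g} ∩ V

/-! ### Calculus of polynomial evaluation -/

def gdual {m : ℕ} (a : Fin m → ℝ) : (Fin m → ℝ) →L[ℝ] ℝ :=
  ∑ i, a i • ContinuousLinearMap.proj i

lemma gdual_apply {m : ℕ} (a v : Fin m → ℝ) : gdual a v = a ⬝ᵥ v := by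
  simp [gdual, dotProduct, ContinuousLinearMap.sum_apply]

lemma contDiff_evalP {m : ℕ} (g : MvPolynomial (Fin m) ℝ) :
    ContDiff ℝ (⊤ : ℕ∞) (fun y : Fin m → ℝ => eval y g) := by
  induction g using MvPolynomial.induction_on with
  | C r => simpa using contDiff_const
  | add p q hp hq => simpa using hp.add hq
  | mul_X p i hp =>
      have : (fun y : Fin m → ℝ => eval y (p * X i)) =
          fun y => eval y p * y i := by simp
      rw [this]
      exact hp.mul (ContinuousLinearMap.proj (R := ℝ) (φ := fun _ : Fin m => ℝ) i).contDiff

lemma contDiff_evalP_omega {m : ℕ} (g : MvPolynomial (Fin m) ℝ) :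
    ContDiff ℝ (⊤ : WithTop ℕ∞) (fun y : Fin m → ℝ => eval y g) := by
  induction g using MvPolynomial.induction_on with
  | C r => simpa using contDiff_const
  | add p q hp hq => simpa using hp.add hq
  | mul_X p i hp =>
      have : (fun y : Fin m → ℝ => eval y (p * X i)) =
          fun y => eval y p * y i := by simp
      rw [this]
      exact hp.mul (ContinuousLinearMap.proj (R := ℝ) (φ := fun _ : Fin m => ℝ) i).contDiff

lemma hasFDerivAt_evalP {m : ℕ} (g : MvPolynomial (Fin m) ℝ) (x : Fin m → ℝ) :
    HasFDerivAt (fun y => eval y g) (gdual (gradEval g x)) x := by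
  induction g using MvPolynomial.induction_on with
  | C r =>
      have : gdual (gradEval (C r : MvPolynomial (Fin m) ℝ) x) = 0 := by
        ext v; simp [gdual_apply, gradEval, dotProduct]
      rw [show (fun y : Fin m → ℝ => eval y (C r : MvPolynomial (Fin m) ℝ)) = fun _ => r by
        funext y; simp, this]
      exact hasFDerivAt_const r x
  | add p q hp hq =>
      have h := hp.add hq
      have : gdual (gradEval (p + q) x) =
          gdual (gradEval p x) + gdual (gradEval q x) := by
        ext v; simp [gdual_apply, gradEval, dotProduct, Finset.sum_add_distrib, add_mul]
      rw [show (fun y : Fin m → ℝ => eval y (p + q)) =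
        fun y => eval y p + eval y q by funext y; simp, this]
      exact h
  | mul_X p i hp =>
      have hproj : HasFDerivAt (fun y : Fin m → ℝ => y i)
          (ContinuousLinearMap.proj (R := ℝ) (φ := fun _ : Fin m => ℝ) i) x :=
        (ContinuousLinearMap.proj (R := ℝ) (φ := fun _ : Fin m => ℝ) i).hasFDerivAt
      have h := hp.mul' hproj
      have heq : gdual (gradEval (p * X i) x) =
          eval x p • (ContinuousLinearMap.proj (R := ℝ) (φ := fun _ : Fin m => ℝ) i)
            + (gdual (gradEval p x)).smulRight (x i) := by
        ext v
        simp only [gdual_apply, gradEval, ContinuousLinearMap.add_apply,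
          ContinuousLinearMap.smul_apply, ContinuousLinearMap.smulRight_apply, gdual_apply,
          ContinuousLinearMap.proj_apply, smul_eq_mul]
        simp only [dotProduct, gradEval, pderiv_mul, pderiv_X, map_add, _root_.map_mul, eval_X,
          Pi.single_apply]
        have hsplit : ∀ j : Fin m,
            ((eval x) ((pderiv j) p) * x i + (eval x) p * (eval x)
              ((if i = j then 1 else 0 : MvPolynomial (Fin m) ℝ))) * v j
            = (eval x) ((pderiv j) p) * v j * x i + (if i = j then (eval x) p * v j else 0) := by
          intro j; split <;> simp <;> ring
        rw [Finset.sum_congr rfl fun j _ => hsplit j, Finset.sum_add_distrib,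
          Finset.sum_ite_eq, if_pos (Finset.mem_univ i), ← Finset.sum_mul]
        ring
      rw [show (fun y : Fin m → ℝ => eval y (p * X i)) =
        fun y => eval y p * y i by funext y; simp, heq]
      exact h

def hessCLM {m : ℕ} (g : MvPolynomial (Fin m) ℝ) (x : Fin m → ℝ) :
    (Fin m → ℝ) →L[ℝ] (Fin m → ℝ) →L[ℝ] ℝ :=
  ∑ i, (gdual (gradEval (pderiv i g) x)).smulRight (ContinuousLinearMap.proj i)

lemma hessCLM_apply {m : ℕ} (g : MvPolynomial (Fin m) ℝ) (x v w : Fin m → ℝ) :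
    hessCLM g x v w = v ⬝ᵥ hessEval g x *ᵥ w := by
  simp only [hessCLM, ContinuousLinearMap.sum_apply, ContinuousLinearMap.smulRight_apply,
    ContinuousLinearMap.smul_apply, ContinuousLinearMap.proj_apply, gdual_apply, smul_eq_mul]
  simp only [dotProduct, mulVec, dotProduct, hessEval, gradEval, Matrix.of_apply,
    Finset.mul_sum, Finset.sum_mul]
  rw [Finset.sum_comm]
  apply Finset.sum_congr rfl; intro j _
  apply Finset.sum_congr rfl; intro i _
  ring

lemma hasFDerivAt_gdual_gradEval {m : ℕ} (g : MvPolynomial (Fin m) ℝ) (x : Fin m → ℝ) :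
    HasFDerivAt (fun y => gdual (gradEval g y)) (hessCLM g x) x := by
  have : ∀ y : Fin m → ℝ, gdual (gradEval g y)
      = ∑ i, (eval y (pderiv i g)) • (ContinuousLinearMap.proj
          (R := ℝ) (φ := fun _ : Fin m => ℝ) i) := fun y => rfl
  simp only [this]
  exact HasFDerivAt.fun_sum fun i _ =>
    (hasFDerivAt_evalP (pderiv i g) x).smul_const (ContinuousLinearMap.proj (R := ℝ) (φ := fun _ : Fin m => ℝ) i)

/-! ### The key curve computation -/

lemma curve_second {m : ℕ} (g : MvPolynomial (Fin m) ℝ) (x u z : Fin m → ℝ)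
    (ψ ψ' : ℝ → ℝ) (q : ℝ) (hψ0 : ψ 0 = 0) (hψ'0 : ψ' 0 = 0)
    (hψd : ∀ᶠ s in nhds (0:ℝ), HasDerivAt ψ (ψ' s) s) (hψ'd : HasDerivAt ψ' q 0)
    (hz : ∀ᶠ s in nhds (0:ℝ), eval (x + s • u + ψ s • z) g = 0) :
    gradEval g x ⬝ᵥ u = 0 ∧
      u ⬝ᵥ hessEval g x *ᵥ u + q * (gradEval g x ⬝ᵥ z) = 0 := by
  set γ : ℝ → (Fin m → ℝ) := fun s => x + s • u + ψ s • z with hγ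
  have hγ0 : γ 0 = x := by simp [hγ, hψ0]
  have hγd : ∀ᶠ s in nhds (0:ℝ), HasDerivAt γ (u + ψ' s • z) s := by
    filter_upwards [hψd] with s hs
    exact ((((hasDerivAt_id s).smul_const u).const_add x).add (hs.smul_const z)).congr_deriv (by simp)
  set k : ℝ → ℝ := fun s => gdual (gradEval g (γ s)) (u + ψ' s • z) with hk
  have hkd : ∀ᶠ s in nhds (0:ℝ), HasDerivAt (fun t => eval (γ t) g) (k s) s := by
    filter_upwards [hγd] with s hs
    exact (hasFDerivAt_evalP g (γ s)).comp_hasDerivAt s hs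
  have hk0 : ∀ᶠ s in nhds (0:ℝ), k s = 0 := by
    obtain ⟨O, hOsub, hOopen, hO0⟩ := eventually_nhds_iff.mp (hz.and hkd)
    filter_upwards [hOopen.mem_nhds hO0] with s hs
    have h1 : (fun t => eval (γ t) g) =ᶠ[nhds s] (fun _ => (0:ℝ)) := by
      filter_upwards [hOopen.mem_nhds hs] with t ht using (hOsub t ht).1
    have h2 := (hOsub s hs).2
    have h3 : HasDerivAt (fun _ : ℝ => (0:ℝ)) (k s) s :=
      h2.congr_of_eventuallyEq h1.symm
    exact ((hasDerivAt_const s (0:ℝ)).unique h3).symm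
  constructor
  · have h0 := hk0.self_of_nhds
    rw [hk] at h0
    simp only [hγ0, hψ'0, gdual_apply, zero_smul, add_zero] at h0
    exact h0
  · have hγd0 : HasDerivAt γ u 0 := by simpa [hψ'0] using hγd.self_of_nhds
    have hcd : HasDerivAt (fun s => gdual (gradEval g (γ s))) (hessCLM g x u) 0 := by
      have h := (hasFDerivAt_gdual_gradEval g (γ 0)).comp_hasDerivAt 0 hγd0
      rw [hγ0] at h
      exact h
    have hwd : HasDerivAt (fun s => u + ψ' s • z) (q • z) 0 :=
      (hψ'd.smul_const z).const_add u
    have hKd : HasDerivAt k (hessCLM g x u (u + ψ' 0 • z) + gdual (gradEval g (γ 0)) (q • z))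
        0 := hcd.clm_apply hwd
    have hzero : HasDerivAt k 0 0 :=
      (hasDerivAt_const 0 (0:ℝ)).congr_of_eventuallyEq hk0
    have := hzero.unique hKd
    rw [hγ0, hψ'0] at this
    simp only [zero_smul, add_zero, gdual_apply, hessCLM_apply] at this
    rw [dotProduct_smul, smul_eq_mul] at this
    linarith

/-- The curve computation for a parametrized surface through `x`. -/
lemma curve_param {n : ℕ} {g : MvPolynomial (Fin (n + 1)) ℝ} {x : Fin (n + 1) → ℝ}
    {v : Fin n → (Fin (n + 1) → ℝ)} {z : Fin (n + 1) → ℝ}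
    {U : Set (Fin n → ℝ)} {φ : (Fin n → ℝ) → ℝ}
    (hU : IsOpen U) (h0U : (0 : Fin n → ℝ) ∈ U) (hφ : ContDiffOn ℝ (⊤ : ℕ∞) φ U)
    (hφ0 : φ 0 = 0) (hdφ0 : fderiv ℝ φ 0 = 0)
    (hZ : ∀ ξ ∈ U, eval (x + (∑ i : Fin n, ξ i • v i) + φ ξ • z) g = 0)
    (c : Fin n → ℝ) :
    gradEval g x ⬝ᵥ (∑ i : Fin n, c i • v i) = 0 ∧
      (∑ i : Fin n, c i • v i) ⬝ᵥ hessEval g x *ᵥ (∑ i : Fin n, c i • v i)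
        + (fderiv ℝ (fderiv ℝ φ) 0 c c) * (gradEval g x ⬝ᵥ z) = 0 := by
  set u := ∑ i : Fin n, c i • v i
  set ψ : ℝ → ℝ := fun s => φ (s • c) with hψ
  set ψ' : ℝ → ℝ := fun s => fderiv ℝ φ (s • c) c with hψ'
  have hmem : ∀ᶠ s in nhds (0:ℝ), s • c ∈ U := by
    have hcont : Continuous fun s : ℝ => s • c := by fun_prop
    have : (fun s : ℝ => s • c) ⁻¹' U ∈ nhds (0:ℝ) := by
      apply hcont.continuousAt.preimage_mem_nhds
      simpa using hU.mem_nhds h0U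
    filter_upwards [this] with s hs using hs
  have hsc : ∀ s : ℝ, HasDerivAt (fun t : ℝ => t • c) c s := fun s => by
    simpa using (hasDerivAt_id s).smul_const c
  have hψd : ∀ᶠ s in nhds (0:ℝ), HasDerivAt ψ (ψ' s) s := by
    filter_upwards [hmem] with s hs
    have hdiff : DifferentiableAt ℝ φ (s • c) :=
      (hφ.contDiffAt (hU.mem_nhds hs)).differentiableAt (by simp)
    exact hdiff.hasFDerivAt.comp_hasDerivAt s (hsc s)
  have hψ'0 : ψ' 0 = 0 := by simp [hψ', hdφ0]
  have hDφ : ContDiffOn ℝ (⊤ : ℕ∞) (fderiv ℝ φ) U :=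
    hφ.fderiv_of_isOpen hU (m := (⊤ : ℕ∞)) (by simp)
  have hDφdiff : DifferentiableAt ℝ (fderiv ℝ φ) 0 :=
    (hDφ.contDiffAt (hU.mem_nhds h0U)).differentiableAt (by simp)
  have hψ'd : HasDerivAt ψ' (fderiv ℝ (fderiv ℝ φ) 0 c c) 0 := by
    have h1 : HasDerivAt (fun s : ℝ => fderiv ℝ φ (s • c)) (fderiv ℝ (fderiv ℝ φ) 0 c) 0 := by
      have h2 : HasFDerivAt (fderiv ℝ φ) (fderiv ℝ (fderiv ℝ φ) 0) ((0:ℝ) • c) := by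
        rw [zero_smul]; exact hDφdiff.hasFDerivAt
      have := h2.comp_hasDerivAt 0 (hsc 0)
      exact this
    have := h1.clm_apply (hasDerivAt_const 0 c)
    simpa using this
  have hψ00 : ψ 0 = 0 := by simp [hψ, hφ0]
  have hz : ∀ᶠ s in nhds (0:ℝ), eval (x + s • u + ψ s • z) g = 0 := by
    filter_upwards [hmem] with s hs
    have hsum : (∑ i : Fin n, (s • c) i • v i) = s • u := by
      rw [Finset.smul_sum]
      exact Finset.sum_congr rfl fun i _ => by simp [smul_smul]
    have h3 : eval (x + (∑ i : Fin n, (s • c) i • v i) + φ (s • c) • z) g = 0 := hZ (s • c) hs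
    rw [hsum] at h3
    exact h3
  exact curve_second g x u z ψ ψ' _ hψ00 hψ'0 hψd hψ'd hz

lemma witness_curve {n : ℕ} {g : MvPolynomial (Fin (n + 1)) ℝ} {x : Fin (n + 1) → ℝ}
    {V : Set (Fin (n + 1) → ℝ)} {b : Module.Basis (Fin (n + 1)) ℝ (Fin (n + 1) → ℝ)}
    {U : Set (Fin n → ℝ)} {φ : (Fin n → ℝ) → ℝ}
    (hw : BasisWitness g x V b U φ) (c : Fin n → ℝ) :
    gradEval g x ⬝ᵥ (∑ i : Fin n, c i • b i.castSucc) = 0 ∧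
      (∑ i : Fin n, c i • b i.castSucc) ⬝ᵥ hessEval g x *ᵥ (∑ i : Fin n, c i • b i.castSucc)
        + (fderiv ℝ (fderiv ℝ φ) 0 c c) * (gradEval g x ⬝ᵥ b (Fin.last n)) = 0 := by
  obtain ⟨hU, h0U, hφ, hφ0, hdφ0, hhess, hZ, hε⟩ := hw
  exact curve_param hU h0U hφ hφ0 hdφ0 (fun ξ hξ => (hZ ξ hξ).1) c

/-! ### Backward direction -/

lemma witness_last {n : ℕ} {g : MvPolynomial (Fin (n + 1)) ℝ} {x : Fin (n + 1) → ℝ}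
    (hgx : eval x g = 0) (hgrad : gradEval g x ≠ 0)
    {V : Set (Fin (n + 1) → ℝ)} {b : Module.Basis (Fin (n + 1)) ℝ (Fin (n + 1) → ℝ)}
    {U : Set (Fin n → ℝ)} {φ : (Fin n → ℝ) → ℝ}
    (hw : BasisWitness g x V b U φ) :
    (∀ i : Fin n, gradEval g x ⬝ᵥ b i.castSucc = 0) ∧
      0 < gradEval g x ⬝ᵥ b (Fin.last n) := by
  have horth : ∀ i : Fin n, gradEval g x ⬝ᵥ b i.castSucc = 0 := by
    intro i
    have := (witness_curve hw (Pi.single i 1)).1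
    have hsum : (∑ j : Fin n, (Pi.single i 1 : Fin n → ℝ) j • b j.castSucc) = b i.castSucc := by
      simp [Pi.single_apply, ite_smul, Finset.sum_ite_eq']
    rwa [hsum] at this
  refine ⟨horth, ?_⟩
  set T := gradEval g x ⬝ᵥ b (Fin.last n) with hT
  have hTne : T ≠ 0 := by
    intro hT0
    have hall : ∀ j : Fin (n + 1), gdual (gradEval g x) (b j) = 0 := by
      intro j
      induction j using Fin.lastCases with
      | last => rw [gdual_apply]; exact hT0
      | cast i => rw [gdual_apply]; exact horth i
    have : (gdual (gradEval g x) : (Fin (n+1) → ℝ) →ₗ[ℝ] ℝ) = 0 := b.ext fun j => hall j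
    have hzero : gdual (gradEval g x) (gradEval g x) = 0 := by
      rw [show gdual (gradEval g x) (gradEval g x)
          = (gdual (gradEval g x) : (Fin (n+1) → ℝ) →ₗ[ℝ] ℝ) (gradEval g x) from rfl, this]
      rfl
    rw [gdual_apply] at hzero
    exact hgrad (dotProduct_self_eq_zero.mp hzero)
  obtain ⟨hU, h0U, hφ, hφ0, hdφ0, hhess, hZ, ε, hε, hS⟩ := hw
  set h : ℝ → ℝ := fun l => eval (x + l • b (Fin.last n)) g with hhdef
  have hd : HasDerivAt h T 0 := by
    have hγ : HasDerivAt (fun l : ℝ => x + l • b (Fin.last n)) (b (Fin.last n)) 0 := by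
      simpa using ((hasDerivAt_id (0:ℝ)).smul_const (b (Fin.last n))).const_add x
    have := (hasFDerivAt_evalP g (x + (0:ℝ) • b (Fin.last n))).comp_hasDerivAt 0 hγ
    rw [zero_smul, add_zero, gdual_apply] at this
    exact this
  have h0 : h 0 = 0 := by simpa [hhdef] using hgx
  have hTnonneg : 0 ≤ T := by
    have hslope := hd.hasDerivWithinAt (s := Set.Ioi (0:ℝ))
    have htend : Filter.Tendsto (fun l => h l / l) (nhdsWithin 0 (Set.Ioi 0)) (nhds T) := by
      have := (hasDerivWithinAt_iff_tendsto_slope).mp hslope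
      rw [Set.diff_singleton_eq_self (by simp)] at this
      refine this.congr' ?_
      filter_upwards [self_mem_nhdsWithin] with l hl
      simp [slope_def_field, h0, div_eq_inv_mul]
    have hnonneg : ∀ᶠ l in nhdsWithin (0:ℝ) (Set.Ioi 0), 0 ≤ h l / l := by
      filter_upwards [Ioo_mem_nhdsGT_of_mem (Set.mem_Ico.mpr ⟨le_refl 0, hε⟩),
        self_mem_nhdsWithin] with l hl hl'
      have := (hS l (Set.mem_Ioo.mp hl).1 (Set.mem_Ioo.mp hl).2).1
      exact div_nonneg this (le_of_lt (Set.mem_Ioi.mp hl'))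
    exact ge_of_tendsto htend hnonneg
  cases' lt_or_eq_of_le hTnonneg with h1 h1
  · exact h1
  · exact absurd h1.symm hTne

lemma witness_qc {n : ℕ} {g : MvPolynomial (Fin (n + 1)) ℝ} {x : Fin (n + 1) → ℝ}
    (hgx : eval x g = 0) (hgrad : gradEval g x ≠ 0)
    {V : Set (Fin (n + 1) → ℝ)} {b : Module.Basis (Fin (n + 1)) ℝ (Fin (n + 1) → ℝ)}
    {U : Set (Fin n → ℝ)} {φ : (Fin n → ℝ) → ℝ}
    (hw : BasisWitness g x V b U φ) : StrictlyQuasiconcaveAt g x := by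
  obtain ⟨horth, hTpos⟩ := witness_last hgx hgrad hw
  intro v hv hva
  set c : Fin n → ℝ := fun i => b.repr v i.castSucc with hc
  set t : ℝ := b.repr v (Fin.last n) with ht
  have hvdecomp : v = (∑ i : Fin n, c i • b i.castSucc) + t • b (Fin.last n) := by
    conv_lhs => rw [← b.sum_repr v]
    rw [Fin.sum_univ_castSucc]
  have hdot : gradEval g x ⬝ᵥ v = t * (gradEval g x ⬝ᵥ b (Fin.last n)) := by
    rw [hvdecomp, ← gdual_apply, map_add, map_sum]
    simp only [_root_.map_smul, gdual_apply, smul_eq_mul]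
    rw [Finset.sum_eq_zero fun i _ => by rw [horth i, mul_zero]]
    ring
  have ht0 : t = 0 := by
    rw [hva] at hdot
    rcases mul_eq_zero.mp hdot.symm with h | h
    · exact h
    · exact absurd h (ne_of_gt hTpos)
  have hvu : v = ∑ i : Fin n, c i • b i.castSucc := by
    rw [hvdecomp, ht0]; simp
  have hcne : c ≠ 0 := by
    intro hc0
    apply hv
    rw [hvu, hc0]; simp
  obtain ⟨_, hcurve⟩ := witness_curve hw c
  rw [← hvu] at hcurve
  have hq : 0 < fderiv ℝ (fderiv ℝ φ) 0 c c := hw.2.2.2.2.2.1 c hcne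
  nlinarith [hcurve, hq, hTpos]

/-! ### Orthogonal basis adapted to the gradient -/

lemma exists_orthogonal_basis {n : ℕ} (a : Fin (n + 1) → ℝ) (ha : a ≠ 0) :
    ∃ b : Module.Basis (Fin (n + 1)) ℝ (Fin (n + 1) → ℝ),
      (∀ i j : Fin (n + 1), i ≠ j → b i ⬝ᵥ b j = 0) ∧
      (∀ i : Fin n, a ⬝ᵥ b i.castSucc = 0) ∧
      b (Fin.last n) = a := by
  classical
  set Eu := EuclideanSpace ℝ (Fin (n + 1))
  set a' : Eu := (WithLp.equiv 2 _).symm a with ha'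
  have ha'ne : a' ≠ 0 := by
    exact fun h => ha ((WithLp.toLp_eq_zero (p := 2)).mp h)
  haveI : Fact (Module.finrank ℝ Eu = n + 1) := ⟨by simp [Eu]⟩
  set o : OrthonormalBasis (Fin n) ℝ ((ℝ ∙ a')ᗮ : Submodule ℝ Eu) :=
    OrthonormalBasis.fromOrthogonalSpanSingleton n ha'ne
  set w : Fin (n + 1) → Eu := Fin.snoc (fun i => (o i : Eu)) a' with hw
  have hinner : ∀ u v : Eu, (inner ℝ u v : ℝ) = (WithLp.equiv 2 _ u) ⬝ᵥ (WithLp.equiv 2 _ v) := by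
    intro u v
    rw [PiLp.inner_apply]
    simp only [dotProduct]
    exact Finset.sum_congr rfl fun i _ => by simp [mul_comm]
  have h2 : w (Fin.last n) = a' := by simp [hw]
  have horthw : ∀ i j : Fin (n + 1), i ≠ j → (inner ℝ (w i) (w j) : ℝ) = 0 := by
    have key : ∀ i : Fin n, (inner ℝ a' (w i.castSucc) : ℝ) = 0 := by
      intro i
      have hmem : ((o i : Eu)) ∈ (ℝ ∙ a')ᗮ := (o i).2
      have := (Submodule.mem_orthogonal _ _).mp hmem a' (Submodule.mem_span_singleton_self a')
      simpa [hw, Fin.snoc_castSucc] using this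
    intro i j hij
    induction i using Fin.lastCases with
    | last =>
      induction j using Fin.lastCases with
      | last => exact absurd rfl hij
      | cast j => rw [h2]; exact key j
    | cast i =>
      induction j using Fin.lastCases with
      | last =>
        rw [h2, real_inner_comm]
        exact key i
      | cast j =>
        have hij' : i ≠ j := fun h => hij (by rw [h])
        have hinner0 := o.orthonormal.2 hij'
        simp only [hw, Fin.snoc_castSucc]
        exact hinner0
  have hwne : ∀ i, w i ≠ 0 := by
    intro i
    induction i using Fin.lastCases with
    | last => simpa [hw, Fin.snoc_last] using ha'ne
    | cast i =>
      simp only [hw, Fin.snoc_castSucc]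
      intro h
      have hn : ‖(o i : Eu)‖ = 1 := by exact o.orthonormal.1 i
      rw [h] at hn
      simp at hn
  have hli : LinearIndependent ℝ w :=
    linearIndependent_of_ne_zero_of_inner_eq_zero hwne horthw
  have hcard : Fintype.card (Fin (n + 1)) = Module.finrank ℝ Eu := by simp [Eu]
  set bE : Module.Basis (Fin (n + 1)) ℝ Eu := basisOfLinearIndependentOfCardEqFinrank hli hcard
  have hbE : ∀ i, bE i = w i :=
    fun i => congrFun (coe_basisOfLinearIndependentOfCardEqFinrank hli hcard) i
  set e : Eu ≃ₗ[ℝ] (Fin (n + 1) → ℝ) := WithLp.linearEquiv 2 ℝ _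
  refine ⟨bE.map e, ?_, ?_, ?_⟩
  · intro i j hij
    have := horthw i j hij
    rw [hinner] at this
    simp only [Module.Basis.map_apply, hbE]
    exact this
  · intro i
    have h1 := horthw (Fin.last n) i.castSucc (Fin.castSucc_lt_last i).ne'
    rw [hinner] at h1
    rw [h2] at h1
    simp only [Module.Basis.map_apply, hbE]
    exact h1
  · rw [Module.Basis.map_apply, hbE, h2, ha']
    rfl

/-! ### Forward direction: construction of the witness -/

set_option maxHeartbeats 1000000 in
lemma forward_witness {n : ℕ} (g : MvPolynomial (Fin (n + 1)) ℝ) (x : Fin (n + 1) → ℝ)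
    (hgx : eval x g = 0) (b : Module.Basis (Fin (n + 1)) ℝ (Fin (n + 1) → ℝ))
    (horth : ∀ i : Fin n, gradEval g x ⬝ᵥ b i.castSucc = 0)
    (hT : 0 < gradEval g x ⬝ᵥ b (Fin.last n))
    (hqc : StrictlyQuasiconcaveAt g x)
    (V : Set (Fin (n + 1) → ℝ)) (hV : V ∈ nhds x) :
    ∃ (U : Set (Fin n → ℝ)) (φ : (Fin n → ℝ) → ℝ), BasisWitness g x V b U φ := by
  classical
  -- the linear parametrization
  set LL : ((Fin n → ℝ) × ℝ) →L[ℝ] (Fin (n + 1) → ℝ) :=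
    (∑ i : Fin n, ((ContinuousLinearMap.proj i).comp
        (ContinuousLinearMap.fst ℝ (Fin n → ℝ) ℝ)).smulRight (b i.castSucc))
      + (ContinuousLinearMap.snd ℝ (Fin n → ℝ) ℝ).smulRight (b (Fin.last n)) with hLL
  have hLL_apply : ∀ (v : Fin n → ℝ) (s : ℝ),
      LL (v, s) = (∑ i : Fin n, v i • b i.castSucc) + s • b (Fin.last n) := by
    intro v s
    simp [hLL, ContinuousLinearMap.sum_apply]
  set A : (Fin n → ℝ) × ℝ → (Fin (n + 1) → ℝ) := fun p => x + LL p with hA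
  have hA0 : A (0, 0) = x := by simp [hA, Prod.mk_zero_zero]
  set G : (Fin n → ℝ) × ℝ → ℝ := fun p => eval (A p) g with hG
  have hGcd : ContDiff ℝ (⊤ : ℕ∞) G :=
    (contDiff_evalP g).comp (contDiff_const.add LL.contDiff)
  have hGd : ∀ p, HasFDerivAt G ((gdual (gradEval g (A p))).comp LL) p := fun p =>
    (hasFDerivAt_evalP g (A p)).comp p (LL.hasFDerivAt.const_add x)
  have hkey : ∀ (v : Fin n → ℝ) (s : ℝ),
      gdual (gradEval g x) (LL (v, s)) = s * (gradEval g x ⬝ᵥ b (Fin.last n)) := by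
    intro v s
    rw [hLL_apply, map_add, map_sum]
    simp only [_root_.map_smul, gdual_apply, smul_eq_mul]
    rw [Finset.sum_eq_zero fun i _ => by rw [horth i, mul_zero]]
    ring
  -- the map to invert
  set Ψ : (Fin n → ℝ) × ℝ → (Fin n → ℝ) × ℝ := fun p => (p.1, G p) with hΨ
  have hΨ00 : Ψ (0, 0) = (0, 0) := by
    simp only [hΨ]
    rw [Prod.ext_iff]
    refine ⟨rfl, ?_⟩
    show G (0, 0) = 0
    rw [hG]
    show eval (A (0, 0)) g = 0
    rw [hA0]
    exact hgx
  set eqv : ((Fin n → ℝ) × ℝ) ≃L[ℝ] ((Fin n → ℝ) × ℝ) :=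
    (ContinuousLinearEquiv.refl ℝ (Fin n → ℝ)).prodCongr
      (ContinuousLinearEquiv.unitsEquivAut ℝ
        (Units.mk0 (gradEval g x ⬝ᵥ b (Fin.last n)) (ne_of_gt hT))) with heqv
  have hΨcd : ContDiffAt ℝ (⊤ : ℕ∞) Ψ (0, 0) := (contDiff_fst.prodMk hGcd).contDiffAt
  have hΨd : HasFDerivAt Ψ (eqv : ((Fin n → ℝ) × ℝ) →L[ℝ] ((Fin n → ℝ) × ℝ)) (0, 0) := by
    have h1 : HasFDerivAt Ψ
        ((ContinuousLinearMap.fst ℝ (Fin n → ℝ) ℝ).prod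
          ((gdual (gradEval g x)).comp LL)) (0, 0) := by
      apply HasFDerivAt.prodMk
      · exact hasFDerivAt_fst
      · have := hGd (0, 0)
        rwa [hA0] at this
    have heq : ((ContinuousLinearMap.fst ℝ (Fin n → ℝ) ℝ).prod
          ((gdual (gradEval g x)).comp LL))
        = (eqv : ((Fin n → ℝ) × ℝ) →L[ℝ] ((Fin n → ℝ) × ℝ)) := by
      apply ContinuousLinearMap.ext
      rintro ⟨v, s⟩
      apply Prod.ext
      · simp [heqv]
      · simp only [ContinuousLinearMap.prod_apply, ContinuousLinearMap.coe_comp',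
          Function.comp_apply, ContinuousLinearMap.coe_fst']
        rw [hkey v s]
        simp [heqv, ContinuousLinearEquiv.prodCongr_apply,
          ContinuousLinearEquiv.unitsEquivAut, Units.smul_def, smul_eq_mul]
    rwa [heq] at h1
  have hs : HasStrictFDerivAt Ψ (eqv : ((Fin n → ℝ) × ℝ) →L[ℝ] ((Fin n → ℝ) × ℝ)) (0, 0) :=
    hΨcd.hasStrictFDerivAt' hΨd (by simp)
  set inv : (Fin n → ℝ) × ℝ → (Fin n → ℝ) × ℝ := hs.localInverse Ψ eqv (0, 0) with hinv
  have hinvsm : ContDiffAt ℝ (⊤ : ℕ∞) inv (0, 0) := by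
    have := hΨcd.to_localInverse (hf' := hΨd) (hn := by simp)
    rwa [hΨ00] at this
  have hinv00 : inv (0, 0) = (0, 0) := by
    have := hs.localInverse_apply_image
    rwa [hΨ00] at this
  set φ : (Fin n → ℝ) → ℝ := fun ξ => (inv (ξ, 0)).2 with hφdef
  have hφ0 : φ 0 = 0 := by
    show (inv (0, 0)).2 = 0
    rw [hinv00]
  have hιcd : ContDiffAt ℝ (⊤ : ℕ∞) (fun ξ : Fin n → ℝ => ((ξ, 0) : (Fin n → ℝ) × ℝ)) 0 :=
    (contDiff_id.prodMk contDiff_const).contDiffAt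
  have hιtend : Filter.Tendsto (fun ξ : Fin n → ℝ => ((ξ, 0) : (Fin n → ℝ) × ℝ))
      (nhds 0) (nhds (0, 0)) := by
    have := hιcd.continuousAt.tendsto
    simpa using this
  have hφcd : ContDiffAt ℝ (⊤ : ℕ∞) φ 0 := by
    have h1 : ContDiffAt ℝ (⊤ : ℕ∞) (fun ξ : Fin n → ℝ => inv (ξ, 0)) 0 :=
      ContDiffAt.comp 0 hinvsm hιcd
    exact ContDiffAt.comp 0 contDiff_snd.contDiffAt h1
  -- local right inverse: G (ξ, φ ξ) = 0 near 0
  have hzero2 : ∀ᶠ ξ in nhds (0 : Fin n → ℝ), G (ξ, φ ξ) = 0 := by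
    have hri := hs.eventually_right_inverse
    rw [hΨ00] at hri
    filter_upwards [hιtend.eventually hri] with ξ hξ
    have h1 : (inv (ξ, 0)).1 = ξ := congrArg Prod.fst hξ
    have h2 : G (inv (ξ, 0)) = 0 := congrArg Prod.snd hξ
    have h3 : inv (ξ, 0) = (ξ, φ ξ) := Prod.ext h1 rfl
    rwa [h3] at h2
  -- membership in V
  have hVmem : ∀ᶠ ξ in nhds (0 : Fin n → ℝ), A (ξ, φ ξ) ∈ V := by
    have hAcont : Continuous A := continuous_const.add LL.continuous
    have h1 : Filter.Tendsto (fun ξ : Fin n → ℝ => ((ξ, φ ξ) : (Fin n → ℝ) × ℝ))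
        (nhds 0) (nhds (0, φ 0)) := continuousAt_id.prodMk hφcd.continuousAt
    have h2 : Filter.Tendsto A (nhds ((0 : Fin n → ℝ), φ 0)) (nhds x) := by
      rw [hφ0, ← hA0]
      exact hAcont.continuousAt
    exact (h2.comp h1).eventually_mem hV
  -- the derivative of φ at 0 vanishes
  have hφdiff : DifferentiableAt ℝ φ 0 := hφcd.differentiableAt (by simp)
  have hdφ0 : fderiv ℝ φ 0 = 0 := by
    have hjd : HasFDerivAt (fun ξ : Fin n → ℝ => ((ξ, φ ξ) : (Fin n → ℝ) × ℝ))
        ((ContinuousLinearMap.id ℝ (Fin n → ℝ)).prod (fderiv ℝ φ 0)) 0 :=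
      (hasFDerivAt_id 0).prodMk hφdiff.hasFDerivAt
    have hGd0 : HasFDerivAt G ((gdual (gradEval g x)).comp LL) ((0 : Fin n → ℝ), φ 0) := by
      have h4 := hGd (0, φ 0)
      have h5 : A ((0 : Fin n → ℝ), φ 0) = x := by rw [hφ0, hA0]
      rwa [h5] at h4
    have hHd : HasFDerivAt (fun ξ : Fin n → ℝ => G (ξ, φ ξ))
        (((gdual (gradEval g x)).comp LL).comp
          ((ContinuousLinearMap.id ℝ (Fin n → ℝ)).prod (fderiv ℝ φ 0))) 0 :=
      by have := hGd0.comp (0 : Fin n → ℝ) hjd; exact this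
    have hH0 : fderiv ℝ (fun ξ : Fin n → ℝ => G (ξ, φ ξ)) 0 = 0 := by
      have heq2 : (fun ξ : Fin n → ℝ => G (ξ, φ ξ)) =ᶠ[nhds 0] (fun _ => (0:ℝ)) := hzero2
      rw [heq2.fderiv_eq]
      exact fderiv_const_apply 0
    rw [hHd.fderiv] at hH0
    apply ContinuousLinearMap.ext
    intro w
    have h6 := congrFun (congrArg (fun (L : (Fin n → ℝ) →L[ℝ] ℝ) => (L : (Fin n → ℝ) → ℝ)) hH0) w
    simp only [ContinuousLinearMap.coe_comp', Function.comp_apply,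
      ContinuousLinearMap.prod_apply, ContinuousLinearMap.coe_id', id_eq,
      ContinuousLinearMap.zero_apply, ContinuousLinearMap.coe_zero, Pi.zero_apply] at h6
    rw [hkey w (fderiv ℝ φ 0 w)] at h6
    have h7 : fderiv ℝ φ 0 w = 0 := by
      rcases mul_eq_zero.mp h6 with h | h
      · exact h
      · exact absurd h (ne_of_gt hT)
    simpa using h7
  -- assemble the open set U
  have hsmooth : ∀ᶠ ξ in nhds (0 : Fin n → ℝ), ContDiffAt ℝ (⊤ : ℕ∞) φ ξ :=
    by
      have hGω : ContDiff ℝ (⊤ : WithTop ℕ∞) G :=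
        (contDiff_evalP_omega g).comp (contDiff_const.add LL.contDiff)
      have hΨω : ContDiffAt ℝ (⊤ : WithTop ℕ∞) Ψ (0, 0) := (contDiff_fst.prodMk hGω).contDiffAt
      have hinvω : ContDiffAt ℝ (⊤ : WithTop ℕ∞) inv (0, 0) := by
        have := hΨω.to_localInverse (hf' := hΨd) (hn := by simp)
        rwa [hΨ00] at this
      have hιω : ContDiffAt ℝ (⊤ : WithTop ℕ∞)
          (fun ξ : Fin n → ℝ => ((ξ, 0) : (Fin n → ℝ) × ℝ)) 0 :=
        (contDiff_id.prodMk contDiff_const).contDiffAt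
      have hφω : ContDiffAt ℝ (⊤ : WithTop ℕ∞) φ 0 :=
        ContDiffAt.comp 0 contDiff_snd.contDiffAt (ContDiffAt.comp 0 hinvω hιω)
      filter_upwards [hφω.eventually (by simp)] with ξ hξ using hξ.of_le le_top
  obtain ⟨U, hUsub, hUopen, hU0⟩ :=
    eventually_nhds_iff.mp ((hzero2.and hVmem).and hsmooth)
  have hUsmooth : ContDiffOn ℝ (⊤ : ℕ∞) φ U := fun ξ hξ => ((hUsub ξ hξ).2).contDiffWithinAt
  have hUz : ∀ ξ ∈ U, eval (x + (∑ i : Fin n, ξ i • b i.castSucc)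
      + φ ξ • b (Fin.last n)) g = 0 := by
    intro ξ hξ
    have h8 : eval (x + LL (ξ, φ ξ)) g = 0 := ((hUsub ξ hξ).1).1
    rw [hLL_apply] at h8
    rwa [← add_assoc] at h8
  have hUV : ∀ ξ ∈ U, (x + (∑ i : Fin n, ξ i • b i.castSucc)
      + φ ξ • b (Fin.last n)) ∈ V := by
    intro ξ hξ
    have h8 : (x + LL (ξ, φ ξ)) ∈ V := ((hUsub ξ hξ).1).2
    rw [hLL_apply] at h8
    rwa [← add_assoc] at h8
  -- the Hessian of φ at 0 is positive definite
  have hhess : ∀ c : Fin n → ℝ, c ≠ 0 → 0 < fderiv ℝ (fderiv ℝ φ) 0 c c := by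
    intro c hcne
    obtain ⟨hu_orth, hcurve⟩ := curve_param hUopen hU0 hUsmooth hφ0 hdφ0 hUz c
    have hune : (∑ i : Fin n, c i • b i.castSucc) ≠ 0 := by
      intro hu0
      apply hcne
      funext i
      have hrepr : b.repr (∑ i : Fin n, c i • b i.castSucc) i.castSucc = c i := by
        rw [map_sum]
        simp only [_root_.map_smul]
        rw [Finset.sum_apply']
        rw [Finset.sum_eq_single i]
        · simp
        · intro j _ hj
          simp [Module.Basis.repr_self, Finsupp.single_apply, Fin.castSucc_inj, hj]
        · simp
      rw [hu0] at hrepr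
      simp only [map_zero, Finsupp.coe_zero, Pi.zero_apply] at hrepr
      rw [Pi.zero_apply, ← hrepr]
    have hneg : (∑ i : Fin n, c i • b i.castSucc) ⬝ᵥ hessEval g x *ᵥ
        (∑ i : Fin n, c i • b i.castSucc) < 0 := hqc _ hune hu_orth
    by_contra hle
    push_neg at hle
    have h9 : fderiv ℝ (fderiv ℝ φ) 0 c c * (gradEval g x ⬝ᵥ b (Fin.last n)) ≤ 0 :=
      mul_nonpos_of_nonpos_of_nonneg hle (le_of_lt hT)
    nlinarith
  -- the ε condition
  have heps : ∃ ε > (0:ℝ), ∀ l : ℝ, 0 < l → l < ε →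
      (x + l • b (Fin.last n)) ∈ {y | 0 ≤ eval y g} ∩ V := by
    set h : ℝ → ℝ := fun l => eval (x + l • b (Fin.last n)) g with hhdef
    have hd : HasDerivAt h (gradEval g x ⬝ᵥ b (Fin.last n)) 0 := by
      have hγ : HasDerivAt (fun l : ℝ => x + l • b (Fin.last n)) (b (Fin.last n)) 0 := by
        simpa using ((hasDerivAt_id (0:ℝ)).smul_const (b (Fin.last n))).const_add x
      have := (hasFDerivAt_evalP g (x + (0:ℝ) • b (Fin.last n))).comp_hasDerivAt 0 hγ
      rw [zero_smul, add_zero, gdual_apply] at this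
      exact this
    have h0 : h 0 = 0 := by simpa [hhdef] using hgx
    have hpos : ∀ᶠ l in nhdsWithin (0:ℝ) (Set.Ioi 0), 0 < h l := by
      have hslope := hd.hasDerivWithinAt (s := Set.Ioi (0:ℝ))
      have htend : Filter.Tendsto (fun l => h l / l) (nhdsWithin 0 (Set.Ioi 0))
          (nhds (gradEval g x ⬝ᵥ b (Fin.last n))) := by
        have := (hasDerivWithinAt_iff_tendsto_slope).mp hslope
        rw [Set.diff_singleton_eq_self (by simp)] at this
        refine this.congr' ?_
        filter_upwards [self_mem_nhdsWithin] with l hl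
        simp [slope_def_field, h0, div_eq_inv_mul]
      have hev : ∀ᶠ l in nhdsWithin (0:ℝ) (Set.Ioi 0), 0 < h l / l :=
        htend.eventually (eventually_gt_nhds hT)
      filter_upwards [hev, self_mem_nhdsWithin] with l hl hl'
      have hlpos : (0:ℝ) < l := Set.mem_Ioi.mp hl'
      by_contra hc
      push_neg at hc
      have : h l / l ≤ 0 := div_nonpos_of_nonpos_of_nonneg hc (le_of_lt hlpos)
      linarith
    have hVl : ∀ᶠ l in nhdsWithin (0:ℝ) (Set.Ioi 0), (x + l • b (Fin.last n)) ∈ V := by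
      have hcont : Continuous (fun l : ℝ => x + l • b (Fin.last n)) := by fun_prop
      have htend : Filter.Tendsto (fun l : ℝ => x + l • b (Fin.last n)) (nhds 0) (nhds x) := by
        simpa using hcont.tendsto 0
      exact (htend.mono_left nhdsWithin_le_nhds).eventually_mem hV
    obtain ⟨ε, hεpos, hεsub⟩ := Metric.mem_nhdsWithin_iff.mp (hpos.and hVl)
    refine ⟨ε, hεpos, fun l hl0 hlε => ?_⟩
    have hmem : l ∈ Metric.ball (0:ℝ) ε ∩ Set.Ioi 0 := by
      constructor
      · rw [Metric.mem_ball, Real.dist_eq, sub_zero, abs_of_pos hl0]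
        exact hlε
      · exact hl0
    obtain ⟨hp, hv⟩ := hεsub hmem
    exact ⟨le_of_lt hp, hv⟩
  refine ⟨U, φ, hUopen, hU0, hUsmooth, hφ0, hdφ0, hhess, ?_, heps⟩
  intro ξ hξ
  exact ⟨hUz ξ hξ, hUV ξ hξ⟩

/-! ### Main theorem -/

theorem stmt_6 {n : ℕ} (g : MvPolynomial (Fin (n + 1)) ℝ) (x : Fin (n + 1) → ℝ)
    (hgx : eval x g = 0) (hgrad : gradEval g x ≠ 0)
    (V : Set (Fin (n + 1) → ℝ)) (hV : V ∈ nhds x) :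
    (StrictlyQuasiconcaveAt g x ↔
      ∃ (b : Module.Basis (Fin (n + 1)) ℝ (Fin (n + 1) → ℝ)) (U : Set (Fin n → ℝ))
        (φ : (Fin n → ℝ) → ℝ), BasisWitness g x V b U φ) ∧
    (StrictlyQuasiconcaveAt g x ↔
      ∃ (b : Module.Basis (Fin (n + 1)) ℝ (Fin (n + 1) → ℝ)) (U : Set (Fin n → ℝ))
        (φ : (Fin n → ℝ) → ℝ),
        (∀ i j : Fin (n + 1), i ≠ j → b i ⬝ᵥ b j = 0) ∧ BasisWitness g x V b U φ) ∧
    (∀ (b : Module.Basis (Fin (n + 1)) ℝ (Fin (n + 1) → ℝ)) (U : Set (Fin n → ℝ))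
        (φ : (Fin n → ℝ) → ℝ), BasisWitness g x V b U φ →
      (∀ i : Fin n, gradEval g x ⬝ᵥ b i.castSucc = 0) ∧
        0 < gradEval g x ⬝ᵥ b (Fin.last n)) := by
  have hforward : StrictlyQuasiconcaveAt g x →
      ∃ (b : Module.Basis (Fin (n + 1)) ℝ (Fin (n + 1) → ℝ)) (U : Set (Fin n → ℝ))
        (φ : (Fin n → ℝ) → ℝ),
        (∀ i j : Fin (n + 1), i ≠ j → b i ⬝ᵥ b j = 0) ∧ BasisWitness g x V b U φ := by
    intro hqc
    obtain ⟨b, horthog, horth, hlast⟩ := exists_orthogonal_basis (gradEval g x) hgrad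
    have hT : 0 < gradEval g x ⬝ᵥ b (Fin.last n) := by
      rw [hlast]
      have hnonneg : 0 ≤ gradEval g x ⬝ᵥ gradEval g x :=
        Finset.sum_nonneg fun i _ => mul_self_nonneg _
      rcases lt_or_eq_of_le hnonneg with h | h
      · exact h
      · exact absurd (dotProduct_self_eq_zero.mp h.symm) hgrad
    obtain ⟨U, φ, hw⟩ := forward_witness g x hgx b horth hT hqc V hV
    exact ⟨b, U, φ, horthog, hw⟩
  refine ⟨⟨fun hqc => ?_, ?_⟩, ⟨fun hqc => hforward hqc, ?_⟩, fun b U φ hw =>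
    witness_last hgx hgrad hw⟩
  · obtain ⟨b, U, φ, _, hw⟩ := hforward hqc
    exact ⟨b, U, φ, hw⟩
  · rintro ⟨b, U, φ, hw⟩
    exact witness_qc hgx hgrad hw
  · rintro ⟨b, U, φ, _, hw⟩
    exact witness_qc hgx hgrad hw
end
end

section
/- Let S ⊆ ℝ^n be a compact set and let g ∈ ℝ[X_1,…,X_n] be strictly quasiconcave on S. Then there exists λ > 0 such that the matrix λ ∇g(x) (∇g(x))ᵀ − Hess g(x) is positive definite for every x ∈ S. -/
open MvPolynomial Matrix

noncomputable section

/-!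
The quadratic form of `λ ∇g ∇gᵀ - Hess g` at `(x, v)` is `λ (∇g(x) ⬝ v)² - vᵀ Hess g(x) v`.
On the compact set `S × {‖v‖ = 1}` the second term is negative wherever the first vanishes,
so by compactness (cover by the open sets where `m (∇g ⬝ v)² > vᵀ Hess g v`, `m ∈ ℕ`) a single
`λ` makes the form positive there; homogeneity in `v` extends this to all `v ≠ 0`.
-/

/-- A compact form of Finsler's lemma. -/
theorem IsCompact.exists_pos_lt_mul {X : Type*} [TopologicalSpace X] {K : Set X}
    (hK : IsCompact K) {a b : X → ℝ} (ha : Continuous a) (hb : Continuous b)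
    (ha_nonneg : ∀ p ∈ K, 0 ≤ a p) (hab : ∀ p ∈ K, a p = 0 → b p < 0) :
    ∃ l : ℝ, 0 < l ∧ ∀ p ∈ K, b p < l * a p := by
  have hcover : K ⊆ ⋃ m : ℕ, {p | b p < m * a p} := by
    intro p hp
    rcases (ha_nonneg p hp).eq_or_lt with hzero | hpos
    · exact Set.mem_iUnion.2 ⟨0, by simpa [← hzero] using hab p hp hzero.symm⟩
    · obtain ⟨m, hm⟩ := exists_nat_gt (b p / a p)
      exact Set.mem_iUnion.2 ⟨m, (div_lt_iff₀ hpos).1 hm⟩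
  obtain ⟨t, ht⟩ := hK.elim_finite_subcover _
    (fun m => isOpen_lt hb (continuous_const.mul ha)) hcover
  obtain ⟨M, hM⟩ := t.exists_le
  refine ⟨M + 1, by positivity, fun p hp => ?_⟩
  obtain ⟨m, hmt, hm⟩ := Set.mem_iUnion₂.1 (ht hp)
  have hmM : (m : ℝ) ≤ M + 1 := by exact_mod_cast (hM m hmt).trans (Nat.le_succ M)
  exact hm.trans_le (mul_le_mul_of_nonneg_right hmM (ha_nonneg p hp))

theorem Matrix.dotProduct_vecMulVec_mulVec_self {R n : Type*} [CommSemiring R] [Fintype n]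
    (w v : n → R) :
    v ⬝ᵥ vecMulVec w w *ᵥ v = (w ⬝ᵥ v) ^ 2 := by
  rw [dotProduct_mulVec, vecMul_vecMulVec, smul_dotProduct, smul_eq_mul, dotProduct_comm v, sq]

theorem Matrix.dotProduct_mulVec_pos_of_sphere {n : Type*} [Fintype n]
    {M : Matrix n n ℝ} (hM : ∀ u ∈ Metric.sphere (0 : n → ℝ) 1, 0 < u ⬝ᵥ M *ᵥ u)
    {v : n → ℝ} (hv : v ≠ 0) : 0 < v ⬝ᵥ M *ᵥ v := by
  have hnorm : ‖v‖ ≠ 0 := norm_ne_zero_iff.2 hv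
  have hu : ‖v‖⁻¹ • v ∈ Metric.sphere (0 : n → ℝ) 1 := by
    simp [norm_smul, hnorm]
  have hscale : (‖v‖⁻¹ • v) ⬝ᵥ M *ᵥ (‖v‖⁻¹ • v) = ‖v‖⁻¹ ^ 2 * (v ⬝ᵥ M *ᵥ v) := by
    rw [mulVec_smul, dotProduct_smul, smul_dotProduct, smul_eq_mul, smul_eq_mul, sq, mul_assoc]
  have hpos := hM _ hu
  rw [hscale] at hpos
  exact pos_of_mul_pos_right hpos (by positivity)

theorem continuous_gradEval {n : ℕ} (g : MvPolynomial (Fin n) ℝ) : Continuous (gradEval g) :=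
  continuous_pi fun i => continuous_eval (pderiv i g)

theorem continuous_hessEval {n : ℕ} (g : MvPolynomial (Fin n) ℝ) : Continuous (hessEval g) :=
  continuous_pi fun i => continuous_pi fun j => continuous_eval (pderiv i (pderiv j g))

theorem stmt_7 {n : ℕ} (S : Set (Fin n → ℝ)) (hS : IsCompact S)
    (g : MvPolynomial (Fin n) ℝ) (hqc : ∀ x ∈ S, StrictlyQuasiconcaveAt g x) :
    ∃ l : ℝ, 0 < l ∧ ∀ x ∈ S, ∀ v : Fin n → ℝ, v ≠ 0 →
      0 < v ⬝ᵥ (l • (Matrix.of fun i j => gradEval g x i * gradEval g x j) -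
        hessEval g x) *ᵥ v := by
  obtain ⟨l, hl, hlt⟩ := (hS.prod (isCompact_sphere (0 : Fin n → ℝ) 1)).exists_pos_lt_mul
    (a := fun p => (gradEval g p.1 ⬝ᵥ p.2) ^ 2) (b := fun p => p.2 ⬝ᵥ hessEval g p.1 *ᵥ p.2)
    (((continuous_gradEval g).comp continuous_fst).dotProduct continuous_snd |>.pow 2)
    (continuous_snd.dotProduct
      (((continuous_hessEval g).comp continuous_fst).matrix_mulVec continuous_snd))
    (fun _ _ => sq_nonneg _)
    (fun p ⟨hx, hu⟩ hzero => hqc p.1 hx p.2 (ne_zero_of_mem_unit_sphere ⟨p.2, hu⟩)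
      (pow_eq_zero_iff two_ne_zero |>.1 hzero))
  refine ⟨l, hl, fun x hx v hv => dotProduct_mulVec_pos_of_sphere (fun u hu => ?_) hv⟩
  have hxu := hlt (x, u) ⟨hx, hu⟩
  rw [sub_mulVec, dotProduct_sub, smul_mulVec, dotProduct_smul, smul_eq_mul]
  change 0 < l * (u ⬝ᵥ vecMulVec (gradEval g x) (gradEval g x) *ᵥ u) - _
  rw [dotProduct_vecMulVec_mulVec_self]
  linarith
end
end

section
/- Suppose g = (g_1,…,g_m) is a tuple of polynomials in ℝ[X_1,…,X_n] such that S(g) is convex and has nonempty interior. Suppose u ∈ S(g) and let I := {i ∈ {1,…,m} : g_i(u) = 0}. Suppose f ∈ ℝ[X_1,…,X_n] and U is a neighborhood of u such that u is a minimizer of f on S(g) ∩ U and the Hessian matrix Hess g_i(x) is negative semidefinite for all x ∈ S(g) ∩ U and all i ∈ I. Then there exists a family (λ_i)_{i∈I} of nonnegative real numbers such that ∇f(u) = ∑_{i∈I} λ_i ∇g_i(u). -/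
open MvPolynomial Matrix

noncomputable section

/-!
The active constraints are concave on `S(g) ∩ U`, since their Hessians are negative semidefinite
there. A concave polynomial that is nonnegative on an open convex set and vanishes at one of its
points has vanishing gradient there, hence is `≤ 0` on the set, hence is the zero polynomial. So
every nonzero active `gᵢ` is positive at an interior point `w` of `S(g)` close to `u`, and
concavity turns this into the Slater condition `∇gᵢ(u) ⬝ (w - u) > 0`. Perturbing a direction `d`
of the linearized cone `{d | ∇gᵢ(u) ⬝ d ≥ 0 for active i}` by `ε (w - u)` makes it a feasible
direction, along which `f` cannot decrease; letting `ε → 0` gives `∇f(u) ⬝ d ≥ 0`, and Farkas'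
lemma writes `∇f(u)` as a nonnegative combination of the active gradients.
-/

open Filter Topology

theorem HasDerivAt.nonneg_of_isMinFilter_nhdsGT {φ : ℝ → ℝ} {φ' x : ℝ} (hφ : HasDerivAt φ φ' x)
    (hmin : IsMinFilter φ (𝓝[>] x) x) : 0 ≤ φ' := by
  have hslope := hφ.hasDerivWithinAt (s := Set.Ioi x)
  rw [hasDerivWithinAt_iff_tendsto_slope, Set.sdiff_singleton_eq_self Set.self_notMem_Ioi] at hslope
  refine ge_of_tendsto hslope ?_
  filter_upwards [hmin, self_mem_nhdsWithin] with y hy hxy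
  rw [slope_def_field]
  exact div_nonneg (sub_nonneg.2 hy) (sub_nonneg.2 (le_of_lt hxy))

theorem HasDerivAt.eventually_pos_nhdsGT {φ : ℝ → ℝ} {φ' x : ℝ} (hφ : HasDerivAt φ φ' x)
    (hx : φ x = 0) (hφ' : 0 < φ') : ∀ᶠ y in 𝓝[>] x, 0 < φ y := by
  have hslope := hφ.hasDerivWithinAt (s := Set.Ioi x)
  rw [hasDerivWithinAt_iff_tendsto_slope, Set.sdiff_singleton_eq_self Set.self_notMem_Ioi] at hslope
  filter_upwards [hslope.eventually (eventually_gt_nhds hφ'), self_mem_nhdsWithin] with y hy hxy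
  exact pos_of_slope_pos hxy hy hx

section Farkas

variable {ι κ : Type*} [Fintype ι] [Fintype κ]

theorem sub_smul_dotProduct_eq_dotProduct_sub_smul (v c d d' : κ → ℝ) (γ : ℝ) :
    (v - (v ⬝ᵥ d / γ) • c) ⬝ᵥ d' = v ⬝ᵥ (d' - (c ⬝ᵥ d' / γ) • d) := by
  simp only [sub_dotProduct, dotProduct_sub, smul_dotProduct, dotProduct_smul, smul_eq_mul]
  ring

theorem eq_sum_smul_add_smul_of_sub_smul_eq_sum_smul {a : ι → κ → ℝ} {b c d : κ → ℝ} {γ : ℝ}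
    {μ : ι → ℝ} (h : b - (b ⬝ᵥ d / γ) • c = ∑ i, μ i • (a i - (a i ⬝ᵥ d / γ) • c)) :
    b = ∑ i, μ i • a i + ((b ⬝ᵥ d - ∑ i, μ i * (a i ⬝ᵥ d)) / γ) • c := by
  rw [← sub_eq_iff_eq_add, sub_div, sub_smul, Finset.sum_div, Finset.sum_smul, ← sub_add, h]
  simp only [smul_sub, smul_smul, Finset.sum_sub_distrib, mul_div_assoc]
  abel

theorem exists_nonneg_sum_smul_eq_of_forall_dotProduct_nonneg [DecidableEq ι] (s : Finset ι)
    (a : ι → κ → ℝ) (b : κ → ℝ) (h : ∀ d, (∀ i ∈ s, 0 ≤ a i ⬝ᵥ d) → 0 ≤ b ⬝ᵥ d) :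
    ∃ lam : ι → ℝ, (∀ i, 0 ≤ lam i) ∧ (∀ i ∉ s, lam i = 0) ∧ b = ∑ i, lam i • a i := by
  induction s using Finset.induction_on generalizing a b with
  | empty =>
    have hb : b ⬝ᵥ b ≤ 0 := by simpa using h (-b) (by simp)
    have hb : b = 0 :=
      dotProduct_self_eq_zero.1 (hb.antisymm (Finset.sum_nonneg fun i _ => mul_self_nonneg (b i)))
    exact ⟨0, fun _ => le_rfl, fun _ _ => rfl, by simp [hb]⟩
  | insert j s hj ih =>
    by_cases hs : ∀ d, (∀ i ∈ s, 0 ≤ a i ⬝ᵥ d) → 0 ≤ b ⬝ᵥ d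
    · obtain ⟨lam, hlam, hsupp, hb⟩ := ih a b hs
      exact ⟨lam, hlam, fun i hi => hsupp i fun h => hi (Finset.mem_insert_of_mem h), hb⟩
    simp only [not_forall, not_le, exists_prop] at hs
    obtain ⟨d, hd, hbd⟩ := hs
    set γ := a j ⬝ᵥ d
    have hγ : γ < 0 := by
      by_contra! hjd
      exact hbd.not_ge (h d (Finset.forall_mem_insert .. |>.2 ⟨hjd, hd⟩))
    -- Fourier–Motzkin step: project along `a j` onto `{v | v ⬝ᵥ d = 0}` and recurse.
    set π : (κ → ℝ) → κ → ℝ := fun v => v - (v ⬝ᵥ d / γ) • a j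
    obtain ⟨μ, hμ, hμs, hπb⟩ := ih (fun i => π (a i)) (π b) fun d' hd' => by
      simp only [π, sub_smul_dotProduct_eq_dotProduct_sub_smul] at hd' ⊢
      refine h _ (Finset.forall_mem_insert .. |>.2 ⟨?_, hd'⟩)
      simp [dotProduct_sub, dotProduct_smul, γ, div_mul_cancel₀ _ hγ.ne]
    set t := (b ⬝ᵥ d - ∑ i, μ i * (a i ⬝ᵥ d)) / γ
    have ht : 0 ≤ t := by
      have : 0 ≤ ∑ i, μ i * (a i ⬝ᵥ d) := Finset.sum_nonneg fun i _ => by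
        by_cases hi : i ∈ s
        · exact mul_nonneg (hμ i) (hd i hi)
        · simp [hμs i hi]
      exact div_nonneg_of_nonpos (by linarith) hγ.le
    have hsingle : (0 : ι → ℝ) ≤ Pi.single j t := Pi.single_nonneg.2 ht
    refine ⟨μ + Pi.single j t, fun i => add_nonneg (hμ i) (hsingle i), fun i hi => ?_, ?_⟩
    · rw [Finset.mem_insert, not_or] at hi
      simp [hμs i hi.2, hi.1]
    · rw [eq_sum_smul_add_smul_of_sub_smul_eq_sum_smul hπb]
      simp [add_smul, Finset.sum_add_distrib, Pi.single_apply, t]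

end Farkas

theorem Convex.nonempty_interior_inter_ball {E : Type*} [NormedAddCommGroup E] [NormedSpace ℝ E]
    {s : Set E} (hs : Convex ℝ s) (hint : (interior s).Nonempty) {u : E} (hu : u ∈ s) {r : ℝ}
    (hr : 0 < r) : (interior s ∩ Metric.ball u r).Nonempty := by
  have hu' : u ∈ closure (interior s) := by
    rw [hs.closure_interior_eq_closure_of_nonempty_interior hint]
    exact subset_closure hu
  obtain ⟨w, hw, hwu⟩ := Metric.mem_closure_iff.1 hu' r hr
  exact ⟨w, hw, by rwa [Metric.mem_ball, dist_comm]⟩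

namespace MvPolynomial

variable {n : ℕ}

theorem gradEval_dotProduct (p : MvPolynomial (Fin n) ℝ) (x d : Fin n → ℝ) :
    gradEval p x ⬝ᵥ d = ∑ i, eval x (pderiv i p) * d i := rfl

theorem gradEval_mul_X_dotProduct (p : MvPolynomial (Fin n) ℝ) (j : Fin n) (x d : Fin n → ℝ) :
    gradEval (p * X j) x ⬝ᵥ d = (gradEval p x ⬝ᵥ d) * x j + eval x p * d j := by
  have hgrad : gradEval (p * X j) x = x j • gradEval p x + eval x p • Pi.single j 1 := by
    ext i
    by_cases hij : i = j
    · subst hij; simp [gradEval, mul_comm, add_comm]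
    · simp [gradEval, hij, mul_comm]
  rw [hgrad, add_dotProduct, smul_dotProduct, smul_dotProduct, single_dotProduct, smul_eq_mul,
    smul_eq_mul, one_mul, mul_comm (x j)]

theorem hasDerivAt_eval_add_smul (p : MvPolynomial (Fin n) ℝ) (u d : Fin n → ℝ) (t : ℝ) :
    HasDerivAt (fun s : ℝ => eval (u + s • d) p) (gradEval p (u + t • d) ⬝ᵥ d) t := by
  induction p using MvPolynomial.induction_on with
  | C a => simpa [gradEval_dotProduct] using hasDerivAt_const t a
  | add p q hp hq =>
    simp only [map_add]
    refine (hp.add hq).congr_deriv ?_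
    simp only [gradEval_dotProduct, map_add, add_mul, Finset.sum_add_distrib]
  | mul_X p j hp =>
    have hX : HasDerivAt (fun s : ℝ => u j + s * d j) (d j) t := by
      simpa using ((hasDerivAt_id t).mul_const (d j)).const_add (u j)
    simp only [map_mul, eval_X, Pi.add_apply, Pi.smul_apply, smul_eq_mul]
    refine (hp.mul hX).congr_deriv ?_
    simp [gradEval_mul_X_dotProduct]

theorem hasDerivAt_gradEval_dotProduct (p : MvPolynomial (Fin n) ℝ) (u d : Fin n → ℝ) (t : ℝ) :
    HasDerivAt (fun s : ℝ => gradEval p (u + s • d) ⬝ᵥ d)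
      (d ⬝ᵥ hessEval p (u + t • d) *ᵥ d) t := by
  simp only [gradEval_dotProduct]
  refine (HasDerivAt.fun_sum (u := Finset.univ)
    fun i _ => (hasDerivAt_eval_add_smul (pderiv i p) u d t).mul_const (d i)).congr_deriv ?_
  simp only [gradEval, hessEval, dotProduct, mulVec, of_apply, Finset.mul_sum, Finset.sum_mul]
  rw [Finset.sum_comm]
  exact Finset.sum_congr rfl fun i _ => Finset.sum_congr rfl fun j _ => by ring

theorem eval_le_eval_add_gradEval_dotProduct {p : MvPolynomial (Fin n) ℝ} {K : Set (Fin n → ℝ)}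
    (hK : Convex ℝ K) (hp : ∀ z ∈ K, ∀ v, v ⬝ᵥ hessEval p z *ᵥ v ≤ 0) {x y : Fin n → ℝ}
    (hx : x ∈ K) (hy : y ∈ K) :
    eval y p ≤ eval x p + gradEval p x ⬝ᵥ (y - x) := by
  have hconcave : ConcaveOn ℝ (Set.Icc 0 1) fun s : ℝ => eval (x + s • (y - x)) p :=
    concaveOn_of_hasDerivWithinAt2_nonpos (convex_Icc 0 1)
      (fun s _ => (hasDerivAt_eval_add_smul p x (y - x) s).continuousAt.continuousWithinAt)
      (fun s _ => (hasDerivAt_eval_add_smul p x (y - x) s).hasDerivWithinAt)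
      (fun s _ => (hasDerivAt_gradEval_dotProduct p x (y - x) s).hasDerivWithinAt)
      (fun s hs => hp _ (hK.add_smul_sub_mem hx hy (interior_subset hs)) _)
  have := hconcave.slope_le_of_hasDerivAt (Set.left_mem_Icc.2 zero_le_one)
    (Set.right_mem_Icc.2 zero_le_one) zero_lt_one (hasDerivAt_eval_add_smul p x (y - x) 0)
  simp only [slope_def_field, zero_smul, add_zero, one_smul, add_sub_cancel, sub_zero,
    div_one] at this
  linarith

theorem gradEval_eq_zero_of_isLocalMin {p : MvPolynomial (Fin n) ℝ} {w : Fin n → ℝ}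
    (h : IsLocalMin (fun x => eval x p) w) : gradEval p w = 0 := by
  ext i
  have hw : IsLocalMin (fun x => eval x p) (w + (0 : ℝ) • Pi.single i 1) := by simpa using h
  have hline : IsLocalMin ((fun x => eval x p) ∘ fun s : ℝ => w + s • Pi.single i 1) 0 :=
    IsLocalMin.comp_continuous (g := fun s : ℝ => w + s • Pi.single i 1) (b := 0) hw (by fun_prop)
  simpa using hline.hasDerivAt_eq_zero (hasDerivAt_eval_add_smul p w _ 0)

theorem eq_zero_of_isOpen_of_eval_eq_zero {σ : Type*} [Fintype σ] {p : MvPolynomial σ ℝ}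
    {V : Set (σ → ℝ)} (hV : IsOpen V) (hne : V.Nonempty) (h : ∀ x ∈ V, eval x p = 0) :
    p = 0 := by
  obtain ⟨w, hw⟩ := hne
  obtain ⟨ρ, hρ, hball⟩ := Metric.isOpen_iff.1 hV w hw
  refine funext_set (fun i => Metric.ball (w i) ρ) (fun i => ?_) fun x hx => ?_
  · rw [Real.ball_eq_Ioo]
    exact Set.Ioo_infinite (by linarith)
  · rw [map_zero]
    exact h x (hball (by rwa [ball_pi w hρ]))

theorem eq_zero_of_eval_eq_zero_of_concave {p : MvPolynomial (Fin n) ℝ} {V : Set (Fin n → ℝ)}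
    (hV : IsOpen V) (hVc : Convex ℝ V) (hp : ∀ z ∈ V, ∀ v, v ⬝ᵥ hessEval p z *ᵥ v ≤ 0)
    (hnonneg : ∀ x ∈ V, 0 ≤ eval x p) {w : Fin n → ℝ} (hw : w ∈ V) (hw0 : eval w p = 0) :
    p = 0 := by
  have hgrad : gradEval p w = 0 := gradEval_eq_zero_of_isLocalMin <|
    Filter.mem_of_superset (hV.mem_nhds hw) fun x hx => by simpa [hw0] using hnonneg x hx
  refine eq_zero_of_isOpen_of_eval_eq_zero hV ⟨w, hw⟩ fun x hx => le_antisymm ?_ (hnonneg x hx)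
  simpa [hw0, hgrad] using eval_le_eval_add_gradEval_dotProduct hVc hp hw hx

theorem eventually_pos_eval_add_smul {p : MvPolynomial (Fin n) ℝ} {u d : Fin n → ℝ}
    (hu : 0 ≤ eval u p) (hd : eval u p = 0 → 0 < gradEval p u ⬝ᵥ d) :
    ∀ᶠ t in 𝓝[>] (0 : ℝ), 0 < eval (u + t • d) p := by
  have hline := hasDerivAt_eval_add_smul p u d 0
  rw [zero_smul, add_zero] at hline
  rcases hu.lt_or_eq with hpos | hzero
  · exact nhdsWithin_le_nhds <|
      hline.continuousAt.eventually (eventually_gt_nhds (by simpa using hpos))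
  · exact hline.eventually_pos_nhdsGT (by simpa using hzero.symm) (hd hzero.symm)

theorem gradEval_dotProduct_nonneg_of_isLocalMinOn {f : MvPolynomial (Fin n) ℝ}
    {S : Set (Fin n → ℝ)} {u d : Fin n → ℝ} (hmin : IsLocalMinOn (fun x => eval x f) S u)
    (hd : ∀ᶠ t in 𝓝[>] (0 : ℝ), u + t • d ∈ S) : 0 ≤ gradEval f u ⬝ᵥ d := by
  have hline := hasDerivAt_eval_add_smul f u d 0
  rw [zero_smul, add_zero] at hline
  refine hline.nonneg_of_isMinFilter_nhdsGT ?_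
  have htendsto : Tendsto (fun t : ℝ => u + t • d) (𝓝[>] 0) (𝓝[S] u) := by
    refine tendsto_nhdsWithin_iff.2 ⟨?_, hd⟩
    have : Continuous fun t : ℝ => u + t • d := by fun_prop
    simpa using (this.tendsto 0).mono_left nhdsWithin_le_nhds
  simpa [IsMinFilter] using htendsto.eventually hmin

theorem gradEval_dotProduct_nonneg_of_slater {m : ℕ} {g : Fin m → MvPolynomial (Fin n) ℝ}
    {f : MvPolynomial (Fin n) ℝ} {u : Fin n → ℝ} (hu : u ∈ SolSet g)
    (hmin : IsLocalMinOn (fun x => eval x f) (SolSet g) u) {e : Fin n → ℝ}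
    (he : ∀ i, eval u (g i) = 0 → g i = 0 ∨ 0 < gradEval (g i) u ⬝ᵥ e) {d : Fin n → ℝ}
    (hd : ∀ i, eval u (g i) = 0 → 0 ≤ gradEval (g i) u ⬝ᵥ d) :
    0 ≤ gradEval f u ⬝ᵥ d := by
  have hperturbed : ∀ ε > 0, 0 ≤ gradEval f u ⬝ᵥ d + ε * gradEval f u ⬝ᵥ e := by
    intro ε hε
    rw [← smul_eq_mul, ← dotProduct_smul, ← dotProduct_add]
    refine gradEval_dotProduct_nonneg_of_isLocalMinOn hmin (eventually_all.2 fun i => ?_)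
    by_cases hgi : g i = 0
    · simp [hgi]
    refine (eventually_pos_eval_add_smul (hu i) fun hi => ?_).mono fun t ht => ht.le
    have := (he i hi).resolve_left hgi
    rw [dotProduct_add, dotProduct_smul, smul_eq_mul]
    nlinarith [hd i hi]
  have hlim : Tendsto (fun ε : ℝ => gradEval f u ⬝ᵥ d + ε * gradEval f u ⬝ᵥ e) (𝓝[>] 0)
      (𝓝 (gradEval f u ⬝ᵥ d)) := by
    have : Continuous fun ε : ℝ => gradEval f u ⬝ᵥ d + ε * gradEval f u ⬝ᵥ e := by fun_prop
    simpa using (this.tendsto 0).mono_left nhdsWithin_le_nhds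
  exact ge_of_tendsto hlim (eventually_nhdsWithin_of_forall hperturbed)

end MvPolynomial

theorem stmt_8 {n m : ℕ} (g : Fin m → MvPolynomial (Fin n) ℝ)
    (hconv : Convex ℝ (SolSet g)) (hint : (interior (SolSet g)).Nonempty)
    (u : Fin n → ℝ) (hu : u ∈ SolSet g)
    (f : MvPolynomial (Fin n) ℝ) (U : Set (Fin n → ℝ)) (hU : U ∈ nhds u)
    (hmin : ∀ x ∈ SolSet g ∩ U, eval u f ≤ eval x f)
    (hhess : ∀ i : Fin m, eval u (g i) = 0 →
      ∀ x ∈ SolSet g ∩ U, ∀ v : Fin n → ℝ, v ⬝ᵥ (hessEval (g i) x) *ᵥ v ≤ 0) :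
    ∃ lam : Fin m → ℝ, (∀ i, 0 ≤ lam i) ∧
      (∀ i, eval u (g i) ≠ 0 → lam i = 0) ∧
      gradEval f u = ∑ i, lam i • gradEval (g i) u := by
  classical
  obtain ⟨r, hr, hrU⟩ := Metric.nhds_basis_ball.mem_iff.1 hU
  have hconcave : ∀ i, eval u (g i) = 0 → ∀ z ∈ SolSet g ∩ Metric.ball u r,
      ∀ v, v ⬝ᵥ hessEval (g i) z *ᵥ v ≤ 0 :=
    fun i hi z hz => hhess i hi z ⟨hz.1, hrU hz.2⟩
  obtain ⟨w, hw, hwu⟩ := hconv.nonempty_interior_inter_ball hint hu hr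
  have hslater : ∀ i, eval u (g i) = 0 → g i = 0 ∨ 0 < gradEval (g i) u ⬝ᵥ (w - u) := by
    refine fun i hi => or_iff_not_imp_left.2 fun hgi => ?_
    have hw_pos : 0 < eval w (g i) := (interior_subset hw i).lt_of_ne' fun hw0 => hgi <|
      eq_zero_of_eval_eq_zero_of_concave (isOpen_interior.inter Metric.isOpen_ball)
        (hconv.interior.inter (convex_ball u r))
        (fun z hz => hconcave i hi z ⟨interior_subset hz.1, hz.2⟩)
        (fun x hx => interior_subset hx.1 i) ⟨hw, hwu⟩ hw0
    have := eval_le_eval_add_gradEval_dotProduct (hconv.inter (convex_ball u r)) (hconcave i hi)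
      ⟨hu, Metric.mem_ball_self hr⟩ ⟨interior_subset hw, hwu⟩
    linarith
  have hlocmin : IsLocalMinOn (fun x => eval x f) (SolSet g) u :=
    Filter.mem_of_superset (inter_mem_nhdsWithin _ hU) hmin
  obtain ⟨lam, hlam, hsupp, hsum⟩ := exists_nonneg_sum_smul_eq_of_forall_dotProduct_nonneg
    {i | eval u (g i) = 0} (fun i => gradEval (g i) u) (gradEval f u) fun d hd =>
      gradEval_dotProduct_nonneg_of_slater hu hlocmin hslater (by simpa using hd)
  exact ⟨lam, hlam, fun i hi => hsupp i (by simpa using hi), hsum⟩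
end
end

section
/- Let c > 0 and let d ∈ ℕ₀ be even. Then f_{c,d}(t) > 0 for all t ∈ ℝ. -/
open Polynomial

noncomputable section

/-- `f_{c,d} = ∑_{k=0}^d (c^k / (k+1)!) (−T)ᵏ`. -/
def fcd (c : ℝ) (d : ℕ) : Polynomial ℝ :=
  ∑ k ∈ Finset.range (d + 1),
    Polynomial.C (c ^ k / (Nat.factorial (k + 1) : ℝ)) * (-Polynomial.X) ^ k

/-!
With `x = -c t`, `f_{c,d}(t) = g_d(x) := ∑_{k ≤ d} x^k / (k+1)!` and `x g_d(x) = S_{d+2}(x) - 1`,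
where `S_n(x) = ∑_{k < n} x^k / k!`. For `x ≥ 0` positivity of `g_d(x)` is clear. For `x < 0`
the partial sums of the exponential series alternate around `exp x`:
`(-1)^n (exp x - S_n(x)) > 0`, by induction on `n`, since the derivative of that function is
minus the previous one and it vanishes at `0`. For even `d` this gives `S_{d+2}(x) < exp x < 1`,
hence `x g_d(x) < 0`.
-/

open Finset Nat

def expPartialSum (n : ℕ) (x : ℝ) : ℝ := ∑ k ∈ range n, x ^ k / k !

lemma expPartialSum_succ (n : ℕ) (x : ℝ) :
    expPartialSum (n + 1) x = 1 + x * ∑ k ∈ range n, x ^ k / (k + 1)! := by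
  rw [expPartialSum, sum_range_succ', mul_sum]
  simp only [pow_zero, factorial_zero, cast_one, div_one]
  rw [add_comm]
  congr 1
  exact sum_congr rfl fun k _ => by rw [pow_succ]; ring

lemma expPartialSum_succ_zero (n : ℕ) : expPartialSum (n + 1) 0 = 1 := by
  simp [expPartialSum_succ]

lemma hasDerivAt_expPartialSum (n : ℕ) (x : ℝ) :
    HasDerivAt (expPartialSum (n + 1)) (expPartialSum n x) x := by
  induction n with
  | zero =>
    have h1 : expPartialSum 1 = fun _ => 1 := funext fun y => by simp [expPartialSum]
    simpa [h1, expPartialSum] using hasDerivAt_const x (1 : ℝ)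
  | succ n ih =>
    have hpow : HasDerivAt (fun y : ℝ => y ^ (n + 1) / (n + 1)!) (x ^ n / n !) x := by
      refine ((hasDerivAt_pow (n + 1) x).div_const ((n + 1)! : ℝ)).congr_deriv ?_
      push_cast [factorial_succ]
      field_simp
    have hsplit :
        expPartialSum (n + 2) = fun y => expPartialSum (n + 1) y + y ^ (n + 1) / (n + 1)! :=
      funext fun y => sum_range_succ _ _
    rw [hsplit, expPartialSum, sum_range_succ]
    exact ih.add hpow

lemma neg_one_pow_mul_exp_sub_expPartialSum_pos {x : ℝ} (hx : x < 0) (n : ℕ) :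
    0 < (-1) ^ n * (Real.exp x - expPartialSum n x) := by
  induction n generalizing x with
  | zero => simpa [expPartialSum] using Real.exp_pos x
  | succ n ih =>
    set g : ℝ → ℝ := fun y => (-1) ^ (n + 1) * (Real.exp y - expPartialSum (n + 1) y)
    have hg : ∀ y, HasDerivAt g (-((-1) ^ n * (Real.exp y - expPartialSum n y))) y := fun y => by
      refine (((Real.hasDerivAt_exp y).sub (hasDerivAt_expPartialSum n y)).const_mul
        ((-1 : ℝ) ^ (n + 1))).congr_deriv ?_
      ring
    have hanti : StrictAntiOn g (Set.Iic 0) := by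
      refine strictAntiOn_of_deriv_neg (convex_Iic 0)
        (fun y _ => (hg y).continuousAt.continuousWithinAt) fun y hy => ?_
      rw [interior_Iic] at hy
      rw [(hg y).deriv, neg_lt_zero]
      exact ih hy
    have hg0 : g 0 = 0 := by simp [g, expPartialSum_succ_zero]
    simpa [hg0] using hanti (Set.mem_Iic.2 hx.le) (Set.mem_Iic.2 le_rfl) hx

lemma sum_range_pow_div_factorial_succ_pos {d : ℕ} (hd : Even d) (x : ℝ) :
    0 < ∑ k ∈ range (d + 1), x ^ k / (k + 1)! := by
  rcases le_or_gt 0 x with hx | hx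
  · rw [sum_range_succ']
    have htail : 0 ≤ ∑ k ∈ range d, x ^ (k + 1) / (k + 1 + 1)! :=
      sum_nonneg fun k _ => by positivity
    simp only [pow_zero, zero_add, factorial_one, cast_one, div_one]
    linarith
  · have hsum := neg_one_pow_mul_exp_sub_expPartialSum_pos hx (d + 2)
    rw [(hd.add even_two).neg_one_pow, one_mul, expPartialSum_succ] at hsum
    have hexp : Real.exp x < 1 := Real.exp_lt_one_iff.2 hx
    by_contra! hnonpos
    nlinarith [mul_nonneg_of_nonpos_of_nonpos hx.le hnonpos]

lemma eval_fcd (c : ℝ) (d : ℕ) (t : ℝ) :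
    (fcd c d).eval t = ∑ k ∈ range (d + 1), (-(c * t)) ^ k / (k + 1)! := by
  simp only [fcd, eval_finsetSum, eval_mul, eval_C, eval_pow, eval_neg, eval_X]
  exact sum_congr rfl fun k _ => by rw [neg_mul_eq_mul_neg, mul_pow]; ring

theorem stmt_10_general (c : ℝ) (d : ℕ) (hd : Even d) :
    ∀ t : ℝ, 0 < (fcd c d).eval t := fun t => by
  rw [eval_fcd]
  exact sum_range_pow_div_factorial_succ_pos hd _

theorem stmt_10 (c : ℝ) (hc : 0 < c) (d : ℕ) (hd : Even d) :
    ∀ t : ℝ, 0 < (fcd c d).eval t :=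
  stmt_10_general c d hd
end
end

section
/- Let H, δ, ε, R ∈ ℝ with H > 0 and 0 < δ < ε < R. Then there exists a univariate polynomial h ∈ ℝ[T] such that h − 1 is a sum of squares of polynomials and the following hold: (a) h(t) + t·h'(t) > 0 for all t ∈ ℝ; (b) 2h'(t) + t·h''(t) < −H·(h(t) + t·h'(t)) for all t ∈ [−R, R]; (c) H · max{ h(t) + t·h'(t) : t ∈ [ε, R] } < min{ h(t) + t·h'(t) : t ∈ [−R, δ] }. -/
/-!
Put b = R + 1 and g(t) = 1 + 2(2m+1)(b - t)^{2m}, and let h be the polynomial with (X h)' = g,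
namely h = 1 + 2 ∑_{i ≤ 2m} b^i (b - X)^{2m-i}. Then h + t h' = g and 2h' + t h'' = g'.
Twice an odd-length homogeneous geometric sum ∑ x^i y^{2m-i} equals
x^{2m} + y^{2m} + ∑_j ((x + y) x^j y^{m-1-j})², so h - 1 is a sum of squares.
On [-R, R] we have 1 ≤ b - t ≤ 2R + 1, so -g'/g, which is about 2m/(b - t), exceeds H once m is
large; and g decreases on (-∞, b], with g(δ)/g(ε) of the order of ((b - δ)/(b - ε))^{2m}.
-/

open Polynomial

noncomputable section

/-- A univariate polynomial is a sum of squares. -/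
def IsSOS1 (p : Polynomial ℝ) : Prop :=
  ∃ (l : ℕ) (q : Fin l → Polynomial ℝ), p = ∑ i, q i ^ 2

open Filter

theorem IsSumSq.isSOS1 {p : ℝ[X]} (hp : IsSumSq p) : IsSOS1 p := by
  induction hp with
  | zero => exact ⟨0, Fin.elim0, by simp⟩
  | sq_add a _ ih =>
    obtain ⟨l, q, rfl⟩ := ih
    exact ⟨l + 1, Fin.cons a q, by simp [Fin.sum_univ_succ, sq]⟩

theorem two_mul_geom_sum₂_odd {R : Type*} [CommSemiring R] (x y : R) (m : ℕ) :
    2 * ∑ i ∈ Finset.range (2 * m + 1), x ^ i * y ^ (2 * m - i) =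
      x ^ (2 * m) + y ^ (2 * m) +
        ∑ j ∈ Finset.range m, ((x + y) * x ^ j * y ^ (m - 1 - j)) ^ 2 := by
  induction m with
  | zero => simp; ring
  | succ m ih =>
    have hS : ∑ i ∈ Finset.range (2 * (m + 1) + 1), x ^ i * y ^ (2 * (m + 1) - i) =
        x ^ 2 * ∑ i ∈ Finset.range (2 * m + 1), x ^ i * y ^ (2 * m - i)
          + x * y ^ (2 * m + 1) + y ^ (2 * m + 2) := by
      rw [show 2 * (m + 1) + 1 = 2 * m + 1 + 1 + 1 by ring, Finset.sum_range_succ',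
        Finset.sum_range_succ', Finset.mul_sum]
      congr 2
      · refine Finset.sum_congr rfl fun i _ => ?_
        rw [show 2 * (m + 1) - (i + 1 + 1) = 2 * m - i by omega]
        ring
      · rw [show 2 * (m + 1) - (0 + 1) = 2 * m + 1 by omega]
        ring
      · simp only [pow_zero, one_mul, Nat.sub_zero]
        ring
    have hT : ∑ j ∈ Finset.range (m + 1), ((x + y) * x ^ j * y ^ (m + 1 - 1 - j)) ^ 2 =
        x ^ 2 * ∑ j ∈ Finset.range m, ((x + y) * x ^ j * y ^ (m - 1 - j)) ^ 2
          + ((x + y) * y ^ m) ^ 2 := by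
      rw [Finset.sum_range_succ', Finset.mul_sum]
      congr 1
      · refine Finset.sum_congr rfl fun j _ => ?_
        rw [show m + 1 - 1 - (j + 1) = m - 1 - j by omega]
        ring
      · simp
    rw [hS, hT, mul_add, mul_add, ← mul_assoc, mul_comm 2 (x ^ 2), mul_assoc, ih]
    ring

theorem isSumSq_two_mul_geom_sum₂_odd {R : Type*} [CommSemiring R] (x y : R) (m : ℕ) :
    IsSumSq (2 * ∑ i ∈ Finset.range (2 * m + 1), x ^ i * y ^ (2 * m - i)) := by
  rw [two_mul_geom_sum₂_odd, pow_mul', pow_mul']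
  exact ((IsSquare.sq _).isSumSq.add (IsSquare.sq _).isSumSq).add (IsSumSq.sum_sq _ _)

theorem derivative_X_mul {R : Type*} [CommSemiring R] (p : R[X]) :
    derivative (X * p) = p + X * derivative p := by
  rw [derivative_mul, derivative_X, one_mul]

theorem derivative_add_X_mul_derivative {R : Type*} [CommSemiring R] (p : R[X]) :
    derivative (p + X * derivative p) = 2 * derivative p + X * derivative (derivative p) := by
  rw [derivative_add, derivative_X_mul]
  ring

section EulerWitness

variable {R : Type*} [CommRing R] (b : R) (m : ℕ)

def eulerWitness : R[X] :=
  1 + 2 * ∑ i ∈ Finset.range (2 * m + 1), C b ^ i * (C b - X) ^ (2 * m - i)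

theorem isSumSq_eulerWitness_sub_one : IsSumSq (eulerWitness b m - 1) := by
  rw [eulerWitness, add_sub_cancel_left]
  exact isSumSq_two_mul_geom_sum₂_odd _ _ m

theorem X_mul_eulerWitness :
    X * eulerWitness b m = X + 2 * (C b ^ (2 * m + 1) - (C b - X) ^ (2 * m + 1)) := by
  have h := geom_sum₂_mul (C b) (C b - X) (2 * m + 1)
  simp only [Nat.add_sub_cancel, sub_sub_cancel] at h
  rw [eulerWitness, ← h]
  ring

theorem eulerWitness_add_X_mul_derivative :
    eulerWitness b m + X * derivative (eulerWitness b m) =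
      1 + 2 * (2 * (m : R[X]) + 1) * (C b - X) ^ (2 * m) := by
  rw [← derivative_X_mul, X_mul_eulerWitness]
  simp [derivative_pow, C_ofNat]
  ring

theorem two_mul_derivative_eulerWitness_add :
    2 * derivative (eulerWitness b m) + X * derivative (derivative (eulerWitness b m)) =
      -(2 * (2 * (m : R[X]) + 1) * (2 * (m : R[X])) * (C b - X) ^ (2 * m - 1)) := by
  rw [← derivative_add_X_mul_derivative, eulerWitness_add_X_mul_derivative]
  simp [derivative_pow, C_ofNat]
  ring

end EulerWitness

theorem eval_eulerWitness_add_mul_derivative (b t : ℝ) (m : ℕ) :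
    (eulerWitness b m).eval t + t * (derivative (eulerWitness b m)).eval t =
      1 + 2 * (2 * m + 1) * (b - t) ^ (2 * m) := by
  simpa using congrArg (eval t) (eulerWitness_add_X_mul_derivative b m)

theorem eval_two_mul_derivative_eulerWitness_add (b t : ℝ) (m : ℕ) :
    2 * (derivative (eulerWitness b m)).eval t
        + t * (derivative (derivative (eulerWitness b m))).eval t =
      -(2 * (2 * m + 1) * (2 * m) * (b - t) ^ (2 * m - 1)) := by
  simpa using congrArg (eval t) (two_mul_derivative_eulerWitness_add b m)

theorem eventually_mul_pow_le_pow (K : ℝ) {p q : ℝ} (hp : 0 < p) (hpq : p < q) :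
    ∀ᶠ n : ℕ in atTop, K * p ^ n ≤ q ^ n := by
  filter_upwards
    [(tendsto_pow_atTop_atTop_of_one_lt ((one_lt_div hp).2 hpq)).eventually_ge_atTop K] with n hn
  rwa [div_pow, le_div_iff₀ (pow_pos hp n)] at hn

theorem exists_lt_two_mul_and_mul_pow_le (K L : ℝ) {p q : ℝ} (hp : 0 < p) (hpq : p < q) :
    ∃ m : ℕ, K < (2 * m : ℕ) ∧ L * p ^ (2 * m) ≤ q ^ (2 * m) := by
  have h_lt := (tendsto_natCast_atTop_atTop.comp
    (tendsto_id.const_mul_atTop' two_pos)).eventually_gt_atTop K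
  have h_le := eventually_mul_pow_le_pow L (pow_pos hp 2) (pow_lt_pow_left₀ hpq hp.le two_ne_zero)
  simp only [← pow_mul] at h_le
  exact (h_lt.and h_le).exists

theorem mul_one_add_mul_pow_lt {H c u w : ℝ} {N : ℕ} (hH : 0 ≤ H) (hc : 1 ≤ c) (hu : 1 ≤ u)
    (huw : u ≤ w) (hN : H * (w + 1) < N) :
    H * (1 + c * u ^ N) < c * N * u ^ (N - 1) := by
  have hN0 : N ≠ 0 := by
    rintro rfl
    rw [Nat.cast_zero] at hN
    nlinarith
  set v := u ^ (N - 1)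
  have hv : 1 ≤ v := one_le_pow₀ hu
  have huN : u ^ N = u * v := by
    rw [← pow_succ', Nat.sub_add_cancel (Nat.one_le_iff_ne_zero.2 hN0)]
  calc H * (1 + c * u ^ N) = H * 1 + H * c * u * v := by rw [huN]; ring
    _ ≤ H * (c * v) + H * c * w * v := by gcongr; exact one_le_mul_of_one_le_of_one_le hc hv
    _ = H * (w + 1) * (c * v) := by ring
    _ < N * (c * v) := by gcongr
    _ = c * N * v := by ring

theorem mul_one_add_mul_lt {H c A D : ℝ} (hH : 0 ≤ H) (hc : 1 ≤ c) (hA : 1 ≤ A)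
    (hD : 2 * H * A ≤ D) : H * (1 + c * A) < 1 + c * D := by
  nlinarith [mul_le_mul_of_nonneg_left hD (by positivity : 0 ≤ c),
    mul_le_mul_of_nonneg_left (one_le_mul_of_one_le_of_one_le hc hA) hH]

theorem antitoneOn_one_add_mul_sub_pow {b c : ℝ} (hc : 0 ≤ c) (N : ℕ) :
    AntitoneOn (fun t => 1 + c * (b - t) ^ N) (Set.Iic b) := by
  intro s _ t ht hst
  have : 0 ≤ b - t := sub_nonneg.2 ht
  dsimp only
  gcongr

theorem stmt_11 (H δ ε R : ℝ) (hH : 0 < H) (h0δ : 0 < δ) (hδε : δ < ε) (hεR : ε < R) :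
    ∃ h : Polynomial ℝ, IsSOS1 (h - 1) ∧
      (∀ t : ℝ, 0 < h.eval t + t * (derivative h).eval t) ∧
      (∀ t ∈ Set.Icc (-R) R,
        2 * (derivative h).eval t + t * (derivative (derivative h)).eval t <
          -H * (h.eval t + t * (derivative h).eval t)) ∧
      H * sSup ((fun t : ℝ => h.eval t + t * (derivative h).eval t) '' Set.Icc ε R) <
        sInf ((fun t : ℝ => h.eval t + t * (derivative h).eval t) '' Set.Icc (-R) δ) := by
  set b := R + 1
  obtain ⟨m, hm_decay, hm_sep⟩ := exists_lt_two_mul_and_mul_pow_le (H * (2 * R + 1 + 1)) (2 * H)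
    (by linarith : 0 < b - ε) (by linarith : b - ε < b - δ)
  have hc : (1 : ℝ) ≤ 2 * (2 * m + 1) := by linarith [m.cast_nonneg (α := ℝ)]
  refine ⟨eulerWitness b m, (isSumSq_eulerWitness_sub_one b m).isSOS1, fun t => ?_,
    fun t ht => ?_, ?_⟩
  · rw [eval_eulerWitness_add_mul_derivative]
    exact add_pos_of_pos_of_nonneg one_pos
      (mul_nonneg (by positivity) ((even_two_mul m).pow_nonneg _))
  · rw [eval_eulerWitness_add_mul_derivative, eval_two_mul_derivative_eulerWitness_add]
    have := mul_one_add_mul_pow_lt (u := b - t) (w := 2 * R + 1) hH.le hc (by linarith [ht.2])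
      (by linarith [ht.1]) hm_decay
    push_cast at this
    linarith
  · have hg := antitoneOn_one_add_mul_sub_pow (b := b) (zero_le_one.trans hc) (2 * m)
    have hIcc {a a' : ℝ} (ha' : a' ≤ b) : Set.Icc a a' ⊆ Set.Iic b :=
      Set.Icc_subset_Iic_self.trans (Set.Iic_subset_Iic.2 ha')
    simp only [eval_eulerWitness_add_mul_derivative]
    rw [(hg.mono (hIcc (by linarith))).sSup_image_Icc hεR.le,
      (hg.mono (hIcc (by linarith))).sInf_image_Icc (by linarith)]
    exact mul_one_add_mul_lt hH.le hc (one_le_pow₀ (by linarith)) hm_sep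
end
end
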